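/- arXiv:math/0607574 — 6 statements merged into one kernel-verified Lean document; each statement's English description precedes it below -/
import Mathlib

section
/- Let u : ℂ → ℝ be continuous and suppose the finite limit c := lim_{|t|→∞}(u(t) − log|t|) exists. Define U : ℂ² → [−∞,∞) by U(z,w) := log|z| + u(w/z) for z ≠ 0, U(0,w) := log|w| + c for w ≠ 0, and U(0,0) := −∞. Let ε > 0, let n be a positive integer, and let p(t) = a_0 + a_1 t + ⋯ + a_n t^n and q(t) = b_0 + b_1 t + ⋯ + b_n t^n be polynomials of degree at most n satisfying u(t) − ε ≤ max((1/n)·log|p(t)|, (1/n)·log|q(t)|) ≤ u(t) for all t ∈ ℂ. Define the homogenizations P(z,w) := Σ_{j=0}^{n} a_j z^{n−j} w^j and Q(z,w) := Σ_{j=0}^{n} b_j z^{n−j} w^j. Then U(z,w) − ε ≤ max((1/n)·log|P(z,w)|, (1/n)·log|Q(z,w)|) ≤ U(z,w) for all (z,w) ∈ ℂ² (inequalities in [−∞,∞)). -/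
open MeasureTheory Filter Topology

noncomputable section

/-- `log |x|`, with value `-∞` at `x = 0`. -/
def elog (x : ℂ) : EReal :=
  if x = 0 then ⊥ else ((Real.log ‖x‖ : ℝ) : EReal)

/-!
For `z ≠ 0` we have `P(z,w) = p(w/z) z^n` and `Q(z,w) = q(w/z) z^n`, so the bounds at `(z,w)` are
the hypothesis at `t = w/z` shifted by `log |z|`. On the line `z = 0` the bounds pass to the limit
`z → 0`: `P` and `Q` are continuous, while
`log |z| + u(w/z) = log |w| + (u(w/z) - log |w/z|) → log |w| + c`.
Comparing `max(|P|,|Q|)` with `exp (n ·)` instead of taking logarithms makes the bounds a closed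
condition, which also covers the points where `P` and `Q` vanish.
-/

open Real Polynomial

lemma coe_le_elog_iff {b : ℝ} {x : ℂ} : (b : EReal) ≤ elog x ↔ rexp b ≤ ‖x‖ := by
  rcases eq_or_ne x 0 with rfl | hx
  · simp [elog, (exp_pos b).not_ge]
  · rw [elog, if_neg hx, EReal.coe_le_coe_iff, le_log_iff_exp_le (norm_pos_iff.2 hx)]

lemma elog_le_coe_iff {b : ℝ} {x : ℂ} : elog x ≤ b ↔ ‖x‖ ≤ rexp b := by
  rcases eq_or_ne x 0 with rfl | hx
  · simp [elog, (exp_pos b).le]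
  · rw [elog, if_neg hx, EReal.coe_le_coe_iff, log_le_iff_le_exp (norm_pos_iff.2 hx)]

lemma coe_le_inv_mul_max_elog_iff {a b : ℝ} (ha : 0 < a) {x y : ℂ} :
    (b : EReal) ≤ (a : EReal)⁻¹ * max (elog x) (elog y) ↔ rexp (b * a) ≤ max ‖x‖ ‖y‖ := by
  rw [← EReal.div_eq_inv_mul, EReal.le_div_iff_mul_le (EReal.coe_pos.2 ha) (EReal.coe_ne_top a),
    ← EReal.coe_mul, le_max_iff, le_max_iff, coe_le_elog_iff, coe_le_elog_iff]

lemma inv_mul_max_elog_le_coe_iff {a b : ℝ} (ha : 0 < a) {x y : ℂ} :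
    (a : EReal)⁻¹ * max (elog x) (elog y) ≤ b ↔ max ‖x‖ ‖y‖ ≤ rexp (a * b) := by
  rw [← EReal.div_eq_inv_mul, EReal.div_le_iff_le_mul (EReal.coe_pos.2 ha) (EReal.coe_ne_top a),
    ← EReal.coe_mul, max_le_iff, max_le_iff, elog_le_coe_iff, elog_le_coe_iff]

/-- `a - ε ≤ (1/n) log y ≤ a`, written without `log`. -/
def LogApprox (n : ℕ) (ε a y : ℝ) : Prop :=
  rexp (n * (a - ε)) ≤ y ∧ y ≤ rexp (n * a)

lemma logApprox_max_norm_iff {n : ℕ} (hn : 0 < n) (ε a : ℝ) (x y : ℂ) :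
    LogApprox n ε a (max ‖x‖ ‖y‖) ↔
      (a : EReal) - ε ≤ ((n : ℝ) : EReal)⁻¹ * max (elog x) (elog y) ∧
        ((n : ℝ) : EReal)⁻¹ * max (elog x) (elog y) ≤ a := by
  have hn' : (0 : ℝ) < n := Nat.cast_pos.2 hn
  rw [← EReal.coe_sub, coe_le_inv_mul_max_elog_iff hn', inv_mul_max_elog_le_coe_iff hn',
    LogApprox, mul_comm (a - ε)]

lemma LogApprox.mul_pow {n : ℕ} {ε a y r : ℝ} (h : LogApprox n ε a y) (hr : 0 < r) :
    LogApprox n ε (log r + a) (y * r ^ n) := by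
  have hexp (b : ℝ) : rexp (n * (log r + b)) = rexp (n * b) * r ^ n := by
    rw [mul_add, exp_add, exp_nat_mul, exp_log hr, mul_comm]
  have hr' : 0 ≤ r ^ n := by positivity
  refine ⟨?_, ?_⟩
  · rw [add_sub_assoc, hexp]; exact mul_le_mul_of_nonneg_right h.1 hr'
  · rw [hexp]; exact mul_le_mul_of_nonneg_right h.2 hr'

lemma isClosed_logApprox (n : ℕ) (ε : ℝ) : IsClosed {x : ℝ × ℝ | LogApprox n ε x.1 x.2} :=
  (isClosed_le (by fun_prop) continuous_snd).inter (isClosed_le continuous_snd (by fun_prop))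

lemma LogApprox.of_forall_ne {X : Type*} [TopologicalSpace X] {x₀ : X} [(𝓝[≠] x₀).NeBot]
    {n : ℕ} {ε L : ℝ} {f g : X → ℝ} (hf : ContinuousAt f x₀) (hg : Tendsto g (𝓝[≠] x₀) (𝓝 L))
    (h : ∀ x ≠ x₀, LogApprox n ε (g x) (f x)) : LogApprox n ε L (f x₀) :=
  (isClosed_logApprox n ε).mem_of_tendsto (hg.prodMk_nhds (hf.tendsto.mono_left nhdsWithin_le_nhds))
    (eventually_nhdsWithin_of_forall h)

lemma tendsto_log_norm_add_comp_div {𝕜 : Type*} [NormedField 𝕜] {u : 𝕜 → ℝ} {c : ℝ}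
    (hc : Tendsto (fun t => u t - log ‖t‖) (comap norm atTop) (𝓝 c)) {w : 𝕜} (hw : w ≠ 0) :
    Tendsto (fun z => log ‖z‖ + u (w / z)) (𝓝[≠] 0) (𝓝 (log ‖w‖ + c)) := by
  have hdiv : Tendsto (fun z : 𝕜 => w / z) (𝓝[≠] 0) (comap norm atTop) := by
    rw [comap_norm_atTop]
    exact ((tendsto_mul_left_cobounded hw).comp tendsto_inv₀_nhdsNE_zero).congr fun z =>
      (div_eq_mul_inv w z).symm
  refine ((hc.comp hdiv).const_add (log ‖w‖)).congr' ?_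
  filter_upwards [self_mem_nhdsWithin] with z hz
  rw [Function.comp_apply, norm_div, log_div (norm_ne_zero_iff.2 hw) (norm_ne_zero_iff.2 hz)]
  ring

lemma eval_homogenize_eq_sum {R : Type*} [CommSemiring R] (p : R[X]) (n : ℕ) (z w : R) :
    MvPolynomial.eval ![w, z] (p.homogenize n) =
      ∑ j ∈ Finset.range (n + 1), p.coeff j * z ^ (n - j) * w ^ j := by
  simp only [homogenize, MvPolynomial.eval_sum, Finset.Nat.sum_antidiagonal_eq_sum_range_succ_mk,
    MvPolynomial.eval_monomial, Finsupp.prod_pow, Fin.prod_univ_two]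
  refine Finset.sum_congr rfl fun j _ => ?_
  simp [mul_assoc, mul_comm]

lemma eval_zero_homogenize {R : Type*} [CommSemiring R] (p : R[X]) {n : ℕ} (hn : n ≠ 0) :
    MvPolynomial.eval 0 (p.homogenize n) = 0 := by
  rw [MvPolynomial.eval_zero, MvPolynomial.constantCoeff_eq,
    (isHomogeneous_homogenize p).coeff_eq_zero]
  simpa using hn.symm

lemma continuous_eval_homogenize_left {R : Type*} [CommSemiring R] [TopologicalSpace R]
    [IsTopologicalSemiring R] (p : R[X]) (n : ℕ) (w : R) :
    Continuous fun z => MvPolynomial.eval ![w, z] (p.homogenize n) :=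
  (MvPolynomial.continuous_eval _).comp (by fun_prop)

lemma logApprox_homogenize {𝕜 : Type*} [NormedField 𝕜] {u : 𝕜 → ℝ} {n : ℕ} {ε : ℝ}
    {p q : 𝕜[X]} (hp : p.natDegree ≤ n) (hq : q.natDegree ≤ n)
    (h : ∀ t, LogApprox n ε (u t) (max ‖p.eval t‖ ‖q.eval t‖)) {z : 𝕜} (hz : z ≠ 0) (w : 𝕜) :
    LogApprox n ε (log ‖z‖ + u (w / z))
      (max ‖MvPolynomial.eval ![w, z] (p.homogenize n)‖
        ‖MvPolynomial.eval ![w, z] (q.homogenize n)‖) := by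
  have hz' : (![w, z] : Fin 2 → 𝕜) 1 ≠ 0 := hz
  rw [eval_homogenize hp _ hz', eval_homogenize hq _ hz']
  simp only [Matrix.cons_val_zero, Matrix.cons_val_one, norm_mul, norm_pow]
  rw [← max_mul_of_nonneg _ _ (by positivity)]
  exact (h (w / z)).mul_pow (norm_pos_iff.2 hz)

lemma logApprox_homogenize_zero_left {𝕜 : Type*} [NontriviallyNormedField 𝕜] {u : 𝕜 → ℝ}
    {n : ℕ} {ε c : ℝ} {p q : 𝕜[X]} (hp : p.natDegree ≤ n) (hq : q.natDegree ≤ n)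
    (h : ∀ t, LogApprox n ε (u t) (max ‖p.eval t‖ ‖q.eval t‖))
    (hc : Tendsto (fun t => u t - log ‖t‖) (comap norm atTop) (𝓝 c)) {w : 𝕜} (hw : w ≠ 0) :
    LogApprox n ε (log ‖w‖ + c)
      (max ‖MvPolynomial.eval ![w, 0] (p.homogenize n)‖
        ‖MvPolynomial.eval ![w, 0] (q.homogenize n)‖) :=
  LogApprox.of_forall_ne
    (f := fun z => max ‖MvPolynomial.eval ![w, z] (p.homogenize n)‖
      ‖MvPolynomial.eval ![w, z] (q.homogenize n)‖)
    ((continuous_eval_homogenize_left p n w).norm.max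
      (continuous_eval_homogenize_left q n w).norm).continuousAt
    (tendsto_log_norm_add_comp_div hc hw)
    fun _ hz => logApprox_homogenize hp hq h hz w

theorem statement5_general (u : ℂ → ℝ) (c : ℝ)
    (hc : Tendsto (fun t => u t - Real.log ‖t‖)
      (Filter.comap (fun t : ℂ => ‖t‖) Filter.atTop) (𝓝 c))
    (U : ℂ × ℂ → EReal)
    (hU₁ : ∀ z w : ℂ, z ≠ 0 →
      U (z, w) = ((Real.log ‖z‖ + u (w / z) : ℝ) : EReal))
    (hU₂ : ∀ w : ℂ, w ≠ 0 →
      U (0, w) = ((Real.log ‖w‖ + c : ℝ) : EReal))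
    (hU₃ : U (0, 0) = ⊥)
    (ε : ℝ) (n : ℕ) (hn : 0 < n)
    (p q : Polynomial ℂ) (hp : p.natDegree ≤ n) (hq : q.natDegree ≤ n)
    (hpq : ∀ t : ℂ,
      ((u t - ε : ℝ) : EReal) ≤
        ((n : ℝ)⁻¹ : EReal) * max (elog (p.eval t)) (elog (q.eval t)) ∧
      ((n : ℝ)⁻¹ : EReal) * max (elog (p.eval t)) (elog (q.eval t)) ≤
        ((u t : ℝ) : EReal))
    (P Q : ℂ → ℂ → ℂ)
    (hP : ∀ z w : ℂ, P z w = ∑ j ∈ Finset.range (n + 1), p.coeff j * z ^ (n - j) * w ^ j)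
    (hQ : ∀ z w : ℂ, Q z w = ∑ j ∈ Finset.range (n + 1), q.coeff j * z ^ (n - j) * w ^ j) :
    ∀ z w : ℂ,
      U (z, w) - (ε : EReal) ≤
        ((n : ℝ)⁻¹ : EReal) * max (elog (P z w)) (elog (Q z w)) ∧
      ((n : ℝ)⁻¹ : EReal) * max (elog (P z w)) (elog (Q z w)) ≤ U (z, w) := by
  have happrox (t : ℂ) : LogApprox n ε (u t) (max ‖p.eval t‖ ‖q.eval t‖) :=
    (logApprox_max_norm_iff hn _ _ _ _).2 (by rw [← EReal.coe_sub]; exact hpq t)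
  intro z w
  simp only [hP, hQ, ← eval_homogenize_eq_sum]
  rcases eq_or_ne z 0 with rfl | hz
  · rcases eq_or_ne w 0 with rfl | hw
    · rw [hU₃, show (![0, 0] : Fin 2 → ℂ) = 0 by simp, eval_zero_homogenize _ hn.ne',
        eval_zero_homogenize _ hn.ne', max_self, elog, if_pos rfl, ← EReal.coe_inv,
        EReal.coe_mul_bot_of_pos (by positivity)]
      simp
    · rw [hU₂ w hw, ← logApprox_max_norm_iff hn]
      exact logApprox_homogenize_zero_left hp hq happrox hc hw
  · rw [hU₁ z w hz, ← logApprox_max_norm_iff hn]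
    exact logApprox_homogenize hp hq happrox hz w

theorem statement5 (u : ℂ → ℝ) (hu : Continuous u) (c : ℝ)
    (hc : Tendsto (fun t => u t - Real.log ‖t‖)
      (Filter.comap (fun t : ℂ => ‖t‖) Filter.atTop) (𝓝 c))
    (U : ℂ × ℂ → EReal)
    (hU₁ : ∀ z w : ℂ, z ≠ 0 →
      U (z, w) = ((Real.log ‖z‖ + u (w / z) : ℝ) : EReal))
    (hU₂ : ∀ w : ℂ, w ≠ 0 →
      U (0, w) = ((Real.log ‖w‖ + c : ℝ) : EReal))
    (hU₃ : U (0, 0) = ⊥)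
    (ε : ℝ) (hε : 0 < ε) (n : ℕ) (hn : 0 < n)
    (p q : Polynomial ℂ) (hp : p.natDegree ≤ n) (hq : q.natDegree ≤ n)
    (hpq : ∀ t : ℂ,
      ((u t - ε : ℝ) : EReal) ≤
        ((n : ℝ)⁻¹ : EReal) * max (elog (p.eval t)) (elog (q.eval t)) ∧
      ((n : ℝ)⁻¹ : EReal) * max (elog (p.eval t)) (elog (q.eval t)) ≤
        ((u t : ℝ) : EReal))
    (P Q : ℂ → ℂ → ℂ)
    (hP : ∀ z w : ℂ, P z w = ∑ j ∈ Finset.range (n + 1), p.coeff j * z ^ (n - j) * w ^ j)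
    (hQ : ∀ z w : ℂ, Q z w = ∑ j ∈ Finset.range (n + 1), q.coeff j * z ^ (n - j) * w ^ j) :
    ∀ z w : ℂ,
      U (z, w) - (ε : EReal) ≤
        ((n : ℝ)⁻¹ : EReal) * max (elog (P z w)) (elog (Q z w)) ∧
      ((n : ℝ)⁻¹ : EReal) * max (elog (P z w)) (elog (Q z w)) ≤ U (z, w) :=
  statement5_general u c hc U hU₁ hU₂ hU₃ ε n hn p q hp hq hpq P Q hP hQ
end
end

section
/- Let Q ⊆ ℂ be a nonempty compact convex set of diameter d, let ν be a finite positive Borel measure on ℂ supported in Q with total mass m := ν(Q) > 0, let b := (1/m)·∫_Q ζ dν(ζ) be its barycenter, let ζ' ∈ Q, and let z ∈ ℂ with r := dist(z, Q) > 0. Then |∫_Q log|z − ζ| dν(ζ) − m·log|z − ζ'|| ≤ m·|b − ζ'|/r + m·d²/r². -/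
open MeasureTheory

/-!
Write `(z - ζ) / (z - ζ') = 1 + u` with `u = (ζ' - ζ) / (z - ζ')`. Since `|z - ζ| ≥ r` on `Q`, we
have `|u| ≤ d / r` and `(1 + d / r) |1 + u| ≥ 1`, and the elementary bounds
`1 - ρ⁻¹ ≤ log ρ ≤ ρ - 1` show that `log |1 + u|` differs from its linearization `Re u` by at most
`(d / r)²`. The linearization is affine in `ζ`, so its integral is `m Re ((ζ' - b) / (z - ζ'))`,
of modulus at most `m |b - ζ'| / r`.
-/

theorem Real.abs_log_sub_le_sq {ρ v a t : ℝ} (hρ : 0 < ρ) (hsq : ρ ^ 2 = 1 + 2 * v + a ^ 2)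
    (hv : |v| ≤ a) (hat : a ≤ t) (hρt : 1 ≤ (1 + t) * ρ) : |Real.log ρ - v| ≤ t ^ 2 := by
  obtain ⟨hva, hav⟩ := abs_le.1 hv
  have ha : 0 ≤ a := (abs_nonneg v).trans hv
  have hat2 : a ^ 2 ≤ t ^ 2 := pow_le_pow_left₀ ha hat 2
  have hpoly : v * ρ - ρ + 1 ≤ t ^ 2 * ρ := by
    rcases le_total ρ 1 with hρ1 | hρ1
    · have : 1 - a ≤ ρ := by nlinarith
      nlinarith [mul_nonneg (sub_nonneg.2 hρ1) (sub_nonneg.2 hρ1),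
        mul_nonneg ha (sub_nonneg.2 hρ1), mul_nonneg (sub_nonneg.2 hρ1) (sub_nonneg.2 hat)]
    · have : ρ ≤ 1 + a := by nlinarith
      nlinarith [mul_nonneg (sub_nonneg.2 hρ1) (sub_nonneg.2 this),
        mul_nonneg ha (sub_nonneg.2 hρ1)]
  -- the lower bound `1 - ρ⁻¹ ≤ log ρ` reduces to `hpoly`
  have hinv : v - 1 + ρ⁻¹ ≤ t ^ 2 := by
    rw [show v - 1 + ρ⁻¹ = (v * ρ - ρ + 1) / ρ by field_simp, div_le_iff₀ hρ]
    exact hpoly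
  have hlog_le := Real.log_le_sub_one_of_pos hρ
  have hle_log := Real.one_sub_inv_le_log_of_pos hρ
  rw [abs_le]
  constructor <;> nlinarith [sq_nonneg (ρ - 1)]

theorem Complex.abs_log_norm_one_add_sub_re_le {u : ℂ} {t : ℝ} (hu : ‖u‖ ≤ t)
    (h1u : 1 ≤ (1 + t) * ‖1 + u‖) : |Real.log ‖1 + u‖ - u.re| ≤ t ^ 2 := by
  have hpos : 0 < ‖1 + u‖ := by
    by_contra! h
    nlinarith [norm_nonneg (1 + u), (norm_nonneg u).trans hu]
  refine Real.abs_log_sub_le_sq hpos ?_ (Complex.abs_re_le_norm u) hu h1u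
  rw [Complex.sq_norm, Complex.sq_norm, Complex.normSq_add]
  simp only [Complex.normSq_one, one_mul, Complex.conj_re]
  ring

theorem Complex.abs_log_norm_sub_sub_re_div_le {z ζ ζ' : ℂ} {r : ℝ} (hr : 0 < r)
    (hζ : r ≤ ‖z - ζ‖) (hζ' : r ≤ ‖z - ζ'‖) :
    |Real.log ‖z - ζ‖ - Real.log ‖z - ζ'‖ - ((ζ' - ζ) / (z - ζ')).re| ≤ (‖ζ - ζ'‖ / r) ^ 2 := by
  have hpos : 0 < ‖z - ζ'‖ := hr.trans_le hζ'
  have hne : z - ζ' ≠ 0 := norm_pos_iff.1 hpos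
  have hquot : 1 + (ζ' - ζ) / (z - ζ') = (z - ζ) / (z - ζ') := by field_simp; ring
  have hu : ‖(ζ' - ζ) / (z - ζ')‖ ≤ ‖ζ - ζ'‖ / r := by
    rw [norm_div, norm_sub_rev]
    exact div_le_div_of_nonneg_left (norm_nonneg _) hr hζ'
  -- `‖z - ζ'‖ ≤ ‖z - ζ‖ + ‖ζ - ζ'‖ ≤ ‖z - ζ‖ (1 + ‖ζ - ζ'‖ / r)`
  have h1u : 1 ≤ (1 + ‖ζ - ζ'‖ / r) * ‖1 + (ζ' - ζ) / (z - ζ')‖ := by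
    rw [hquot, norm_div, mul_div_assoc', le_div_iff₀ hpos, one_mul]
    have htri : ‖z - ζ'‖ ≤ ‖z - ζ‖ + ‖ζ - ζ'‖ := norm_sub_le_norm_sub_add_norm_sub _ _ _
    have hscale : ‖ζ - ζ'‖ ≤ ‖ζ - ζ'‖ / r * ‖z - ζ‖ := by
      rw [div_mul_eq_mul_div, le_div_iff₀ hr]
      exact mul_le_mul_of_nonneg_left hζ (norm_nonneg _)
    linarith
  have h := Complex.abs_log_norm_one_add_sub_re_le hu h1u
  rwa [hquot, norm_div, Real.log_div (hr.trans_le hζ).ne' hpos.ne'] at h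

theorem MeasureTheory.setIntegral_re_sub_div {ν : Measure ℂ} {Q : Set ℂ} (hQ : ν Q ≠ ⊤)
    (hint : IntegrableOn (fun ζ ↦ ζ) Q ν) (w c : ℂ) :
    ∫ ζ in Q, ((w - ζ) / c).re ∂ν = ((ν.real Q • w - ∫ ζ in Q, ζ ∂ν) / c).re := by
  have hw : IntegrableOn (fun _ ↦ w) Q ν := integrableOn_const hQ
  have hdiv : IntegrableOn (fun ζ ↦ (w - ζ) / c) Q ν := (hw.sub hint).div_const c
  have h := integral_re (𝕜 := ℂ) hdiv
  simp only [RCLike.re_to_complex] at h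
  rw [h, integral_div, integral_sub hw hint, setIntegral_const]

theorem MeasureTheory.abs_setIntegral_sub_mul_le {α : Type*} [MeasurableSpace α]
    {μ : Measure α} {s : Set α} (hs : μ s < ⊤) {f g : α → ℝ} (hf : IntegrableOn f s μ)
    (hg : IntegrableOn g s μ) {c C : ℝ} (h : ∀ x ∈ s, |f x - c - g x| ≤ C) :
    |∫ x in s, f x ∂μ - μ.real s * c| ≤ C * μ.real s + |∫ x in s, g x ∂μ| := by
  have hc : IntegrableOn (fun _ ↦ c) s μ := integrableOn_const hs.ne
  have hfc : IntegrableOn (fun x ↦ f x - c) s μ := hf.sub hc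
  have hsplit : ∫ x in s, f x ∂μ - μ.real s * c
      = (∫ x in s, (f x - c - g x) ∂μ) + ∫ x in s, g x ∂μ := by
    rw [integral_sub hfc hg, integral_sub hf hc, setIntegral_const, smul_eq_mul]
    ring
  rw [hsplit]
  refine (abs_add_le _ _).trans (add_le_add_left ?_ _)
  exact norm_setIntegral_le_of_norm_le_const (f := fun x ↦ f x - c - g x) hs h

theorem statement9_general (Q : Set ℂ) (hQc : IsCompact Q)
    (ν : Measure ℂ) [IsFiniteMeasure ν]
    (m : ℝ) (hm : m = (ν Q).toReal) (hmpos : 0 < m)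
    (d : ℝ) (hd : d = Metric.diam Q)
    (b : ℂ) (hb : b = (1 / m : ℝ) • ∫ ζ in Q, ζ ∂ν)
    (ζ' : ℂ) (hζ' : ζ' ∈ Q)
    (z : ℂ) (r : ℝ) (hr : r = Metric.infDist z Q) (hrpos : 0 < r) :
    |(∫ ζ in Q, Real.log (‖z - ζ‖) ∂ν) - m * Real.log (‖z - ζ'‖)|
      ≤ m * ‖b - ζ'‖ / r + m * d ^ 2 / r ^ 2 := by
  have hm' : ν.real Q = m := hm.symm
  have hdist : ∀ ζ ∈ Q, r ≤ ‖z - ζ‖ := fun ζ hζ ↦ by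
    rw [hr, ← Complex.dist_eq]; exact Metric.infDist_le_dist_of_mem hζ
  have hlog : IntegrableOn (fun ζ ↦ Real.log ‖z - ζ‖) Q ν :=
    (ContinuousOn.log (by fun_prop) fun ζ hζ ↦
      (hrpos.trans_le (hdist ζ hζ)).ne').integrableOn_compact hQc
  have hlin : IntegrableOn (fun ζ ↦ ((ζ' - ζ) / (z - ζ')).re) Q ν :=
    (Continuous.continuousOn (by fun_prop)).integrableOn_compact hQc
  have hpt : ∀ ζ ∈ Q,
      |Real.log ‖z - ζ‖ - Real.log ‖z - ζ'‖ - ((ζ' - ζ) / (z - ζ')).re| ≤ d ^ 2 / r ^ 2 := by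
    intro ζ hζ
    have hdiam : ‖ζ - ζ'‖ ≤ d :=
      hd ▸ dist_eq_norm ζ ζ' ▸ Metric.dist_le_diam_of_mem hQc.isBounded hζ hζ'
    refine (Complex.abs_log_norm_sub_sub_re_div_le hrpos (hdist ζ hζ) (hdist ζ' hζ')).trans ?_
    rw [div_pow]
    gcongr
  have hbary : ∫ ζ in Q, ((ζ' - ζ) / (z - ζ')).re ∂ν = ((m • (ζ' - b)) / (z - ζ')).re := by
    rw [setIntegral_re_sub_div (measure_ne_top ν Q)
      (continuous_id.continuousOn.integrableOn_compact hQc), hm', smul_sub, hb, smul_smul,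
      mul_one_div_cancel hmpos.ne', one_smul]
  have hbary_le : |((m • (ζ' - b)) / (z - ζ')).re| ≤ m * ‖b - ζ'‖ / r := by
    refine (Complex.abs_re_le_norm _).trans ?_
    rw [norm_div, norm_smul, Real.norm_of_nonneg hmpos.le, norm_sub_rev]
    exact div_le_div_of_nonneg_left (by positivity) hrpos (hdist ζ' hζ')
  have h := abs_setIntegral_sub_mul_le (measure_lt_top ν Q) hlog hlin hpt
  rw [hm', hbary] at h
  calc _ ≤ d ^ 2 / r ^ 2 * m + m * ‖b - ζ'‖ / r := h.trans (add_le_add_right hbary_le _)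
    _ = m * ‖b - ζ'‖ / r + m * d ^ 2 / r ^ 2 := by ring

theorem statement9 (Q : Set ℂ) (hQne : Q.Nonempty) (hQc : IsCompact Q)
    (hQconv : Convex ℝ Q)
    (ν : Measure ℂ) [IsFiniteMeasure ν] (hsupp : ν Qᶜ = 0)
    (m : ℝ) (hm : m = (ν Q).toReal) (hmpos : 0 < m)
    (d : ℝ) (hd : d = Metric.diam Q)
    (b : ℂ) (hb : b = (1 / m : ℝ) • ∫ ζ in Q, ζ ∂ν)
    (ζ' : ℂ) (hζ' : ζ' ∈ Q)
    (z : ℂ) (r : ℝ) (hr : r = Metric.infDist z Q) (hrpos : 0 < r) :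
    |(∫ ζ in Q, Real.log (‖z - ζ‖) ∂ν) - m * Real.log (‖z - ζ'‖)|
      ≤ m * ‖b - ζ'‖ / r + m * d ^ 2 / r ^ 2 :=
  statement9_general Q hQc ν m hm hmpos d hd b hb ζ' hζ' z r hr hrpos
end

section
/- Let N ≥ 1 and let K ⊆ ℂ^N be a compact, circled, regular set. Then V_K(z) = max(0, ρ_K(z)) for every z ∈ ℂ^N. -/
open MeasureTheory Filter Topology

noncomputable section

variable (N : ℕ)

/-- The set of competitors `(1/deg p) log |p(z)|` in the definition of the extremal
function of `K ⊆ ℂ^N`. -/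
def candSet (K : Set (Fin N → ℂ)) (z : Fin N → ℂ) : Set ℝ :=
  {v | ∃ p : MvPolynomial (Fin N) ℂ, 1 ≤ p.totalDegree ∧
      (∀ x ∈ K, ‖MvPolynomial.eval x p‖ ≤ 1) ∧
      v = (p.totalDegree : ℝ)⁻¹ * Real.log ‖MvPolynomial.eval z p‖}

/-- The (pluricomplex) extremal function `V_K`. -/
def VK (K : Set (Fin N → ℂ)) (z : Fin N → ℂ) : ℝ :=
  max 0 (sSup (candSet N K z))

/-- `K` is regular: `V_K` is finite and continuous. -/
def Regular (K : Set (Fin N → ℂ)) : Prop :=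
  (∀ z, BddAbove (candSet N K z)) ∧ Continuous (VK N K)

/-- `K` is circled. -/
def Circled (K : Set (Fin N → ℂ)) : Prop :=
  ∀ z ∈ K, ∀ t : ℝ, (Complex.exp (t * Complex.I)) • z ∈ K

/-- The Robin function of `K`, with values in `[-∞, ∞)` (here `EReal`). -/
def robin (K : Set (Fin N → ℂ)) (z : Fin N → ℂ) : EReal :=
  Filter.limsup
    (fun l : ℂ => ((VK N K (l • z) - Real.log ‖l‖ : ℝ) : EReal))
    (Filter.comap (fun l : ℂ => ‖l‖) Filter.atTop)

/-! If `K` is circled, every homogeneous component of a polynomial bounded by `1` on `K` is again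
bounded by `1` on `K`: restricted to a complex line `c ↦ c • x` the components are the Taylor
coefficients, which are recovered by averaging over roots of unity. Writing `p ^ k` as a sum of
its components and letting `k → ∞` shows that `V_K = max 0 H`, where `H z` is the supremum of
`(1/j) log |h z|` over homogeneous `h` of degree `j ≥ 1` with `|h| ≤ 1` on `K`. Since
`H (λ • z) = H z + log |λ|`, the function `V_K (λ • z) - log |λ|` is eventually equal to `H z`
(or tends to `-∞` when no such `h` is nonzero at `z`), so `ρ_K = H`. -/

open MvPolynomial Finset

lemma MvPolynomial.IsHomogeneous.eval_smul {σ R : Type*} [CommSemiring R]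
    {p : MvPolynomial σ R} {n : ℕ} (hp : p.IsHomogeneous n) (c : R) (x : σ → R) :
    eval (c • x) p = c ^ n * eval x p := by
  rw [eval_eq, eval_eq, mul_sum]
  refine sum_congr rfl fun d hd => ?_
  have hdeg : ∑ i ∈ d.support, d i = n := by
    simpa [Finsupp.weight_apply, Finsupp.sum] using hp (mem_support_iff.mp hd)
  simp only [Pi.smul_apply, smul_eq_mul, mul_pow, prod_mul_distrib, prod_pow_eq_pow_sum, hdeg]
  ring

lemma MvPolynomial.eval_smul_eq_sum_homogeneousComponent {σ R : Type*} [CommSemiring R]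
    (q : MvPolynomial σ R) (c : R) (x : σ → R) :
    eval (c • x) q =
      ∑ i ∈ range (q.totalDegree + 1), c ^ i * eval x (homogeneousComponent i q) := by
  conv_lhs => rw [← sum_homogeneousComponent q]
  rw [map_sum]
  exact sum_congr rfl fun i _ => (homogeneousComponent_isHomogeneous i q).eval_smul c x

-- Averaging over the `(D+1)`-th roots of unity picks out one coefficient.
lemma norm_le_of_forall_norm_sum_pow_mul_le {a : ℕ → ℂ} {D j : ℕ} {B : ℝ} (hj : j ≤ D)
    (h : ∀ c : ℂ, ‖c‖ = 1 → ‖∑ i ∈ range (D + 1), c ^ i * a i‖ ≤ B) : ‖a j‖ ≤ B := by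
  set n := D + 1
  have hn : n ≠ 0 := by omega
  obtain ⟨ω, hω⟩ : ∃ ω : ℂ, IsPrimitiveRoot ω n := ⟨_, Complex.isPrimitiveRoot_exp n hn⟩
  have hnorm : ∀ m : ℕ, ‖ω ^ m‖ = 1 := fun m => by rw [norm_pow, hω.norm'_eq_one hn, one_pow]
  have geom : ∀ i ∈ range n,
      ∑ k ∈ range n, (ω ^ (n - j + i)) ^ k = if i = j then (n : ℂ) else 0 := by
    intro i hi
    have hi : i < n := mem_range.mp hi
    split_ifs with hij
    · subst hij
      rw [Nat.sub_add_cancel (by omega), hω.pow_eq_one]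
      simp
    · have hne : ω ^ (n - j + i) ≠ 1 := by
        rw [Ne, hω.pow_eq_one_iff_dvd]
        rintro ⟨c, hc⟩
        rcases c with _ | _ | c <;> simp only [Nat.mul_succ, Nat.mul_zero, zero_add] at hc <;> omega
      rw [geom_sum_eq hne, ← pow_mul, mul_comm, pow_mul, hω.pow_eq_one, one_pow, sub_self,
        zero_div]
  have fourier : (n : ℂ) * a j =
      ∑ k ∈ range n, ω ^ (k * (n - j)) * ∑ i ∈ range n, (ω ^ k) ^ i * a i := by
    simp_rw [mul_sum]
    rw [sum_comm]
    calc (n : ℂ) * a j = ∑ i ∈ range n, (if i = j then (n : ℂ) else 0) * a i := by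
          rw [sum_eq_single_of_mem j (mem_range.mpr (by omega))] <;> simp_all
      _ = _ := by
          refine sum_congr rfl fun i hi => ?_
          rw [← geom i hi, sum_mul]
          refine sum_congr rfl fun k _ => ?_
          rw [← pow_mul, ← pow_mul, ← mul_assoc, ← pow_add]
          ring
  have hsum : ‖(n : ℂ) * a j‖ ≤ n * B := by
    rw [fourier]
    calc _ ≤ ∑ k ∈ range n, ‖ω ^ (k * (n - j)) * ∑ i ∈ range n, (ω ^ k) ^ i * a i‖ :=
          norm_sum_le _ _
      _ ≤ ∑ _k ∈ range n, B := by
          refine sum_le_sum fun k _ => ?_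
          rw [norm_mul, hnorm, one_mul]
          exact h _ (hnorm k)
      _ = n * B := by simp
  rw [norm_mul, Complex.norm_natCast] at hsum
  exact le_of_mul_le_mul_left hsum (by positivity)

lemma MvPolynomial.norm_eval_homogeneousComponent_le {σ : Type*} {q : MvPolynomial σ ℂ}
    {x : σ → ℂ} {B : ℝ} (h : ∀ c : ℂ, ‖c‖ = 1 → ‖eval (c • x) q‖ ≤ B) (j : ℕ) :
    ‖eval x (homogeneousComponent j q)‖ ≤ B := by
  have hB : 0 ≤ B := (norm_nonneg _).trans (by simpa using h 1 norm_one)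
  simp_rw [eval_smul_eq_sum_homogeneousComponent] at h
  rcases le_or_gt j q.totalDegree with hj | hj
  · exact norm_le_of_forall_norm_sum_pow_mul_le hj h
  · rw [homogeneousComponent_eq_zero j q hj, map_zero, norm_zero]
    exact hB

lemma le_zero_of_forall_nat_mul_le_log {t c : ℝ} (hc : 0 ≤ c)
    (h : ∀ k : ℕ, k * t ≤ Real.log (c * k + 1)) : t ≤ 0 := by
  by_contra! ht
  obtain ⟨k, hk⟩ := exists_nat_gt (2 * c / t ^ 2)
  have hk0 : (0 : ℝ) < k := lt_of_le_of_lt (by positivity) hk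
  have hexp : Real.exp (k * t) ≤ c * k + 1 :=
    (Real.le_log_iff_exp_le (by positivity)).mp (h k)
  have hquad := Real.quadratic_le_exp_of_nonneg (mul_pos hk0 ht).le
  rw [div_lt_iff₀ (by positivity)] at hk
  nlinarith

section

variable {N}

lemma Circled.smul_mem {K : Set (Fin N → ℂ)} (hcirc : Circled N K) {z : Fin N → ℂ} (hz : z ∈ K)
    {c : ℂ} (hc : ‖c‖ = 1) : c • z ∈ K := by
  have hpolar := Complex.norm_mul_exp_arg_mul_I c
  rw [hc, Complex.ofReal_one, one_mul] at hpolar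
  exact hpolar ▸ hcirc z hz c.arg

def homCandSet (K : Set (Fin N → ℂ)) (z : Fin N → ℂ) : Set ℝ :=
  {v | ∃ (j : ℕ) (p : MvPolynomial (Fin N) ℂ), 1 ≤ j ∧ p.IsHomogeneous j ∧
      (∀ x ∈ K, ‖eval x p‖ ≤ 1) ∧ eval z p ≠ 0 ∧ v = (j : ℝ)⁻¹ * Real.log ‖eval z p‖}

lemma homCandSet_subset_candSet (K : Set (Fin N → ℂ)) (z : Fin N → ℂ) :
    homCandSet K z ⊆ candSet N K z := by
  rintro v ⟨j, p, hj, hp, hK, hz, rfl⟩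
  have hdeg : p.totalDegree = j := hp.totalDegree fun h => hz (by simp [h])
  exact ⟨p, hdeg ▸ hj, hK, by rw [hdeg]⟩

lemma homCandSet_smul (K : Set (Fin N → ℂ)) {c : ℂ} (hc : c ≠ 0) (z : Fin N → ℂ) :
    homCandSet K (c • z) = (· + Real.log ‖c‖) '' homCandSet K z := by
  have hlog : ∀ {j : ℕ} {p : MvPolynomial (Fin N) ℂ}, 1 ≤ j → p.IsHomogeneous j →
      eval z p ≠ 0 → (j : ℝ)⁻¹ * Real.log ‖eval (c • z) p‖ =
        (j : ℝ)⁻¹ * Real.log ‖eval z p‖ + Real.log ‖c‖ := by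
    intro j p hj hp hz
    have : (j : ℝ) ≠ 0 := by positivity
    rw [hp.eval_smul, norm_mul, norm_pow, Real.log_mul (by positivity) (norm_ne_zero_iff.mpr hz),
      Real.log_pow]
    field_simp
    ring
  ext v
  constructor
  · rintro ⟨j, p, hj, hp, hK, hcz, rfl⟩
    have hz : eval z p ≠ 0 := fun h => hcz (by rw [hp.eval_smul, h, mul_zero])
    exact ⟨_, ⟨j, p, hj, hp, hK, hz, rfl⟩, (hlog hj hp hz).symm⟩
  · rintro ⟨_, ⟨j, p, hj, hp, hK, hz, rfl⟩, rfl⟩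
    have hcz : eval (c • z) p ≠ 0 := by
      rw [hp.eval_smul]
      exact mul_ne_zero (pow_ne_zero _ hc) hz
    exact ⟨j, p, hj, hp, hK, hcz, (hlog hj hp hz).symm⟩

variable {K : Set (Fin N → ℂ)}

lemma Circled.norm_eval_homogeneousComponent_le (hcirc : Circled N K)
    {q : MvPolynomial (Fin N) ℂ} (hq : ∀ x ∈ K, ‖eval x q‖ ≤ 1) (j : ℕ) {x : Fin N → ℂ}
    (hx : x ∈ K) : ‖eval x (homogeneousComponent j q)‖ ≤ 1 :=
  MvPolynomial.norm_eval_homogeneousComponent_le (fun _ hc => hq _ (hcirc.smul_mem hx hc)) j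

lemma norm_eval_homogeneousComponent_le_exp (hKne : K.Nonempty) (hcirc : Circled N K)
    {z : Fin N → ℂ} (hbdd : BddAbove (homCandSet K z))
    {q : MvPolynomial (Fin N) ℂ} (hq : ∀ x ∈ K, ‖eval x q‖ ≤ 1) (i : ℕ) :
    ‖eval z (homogeneousComponent i q)‖ ≤ Real.exp (i * max 0 (sSup (homCandSet K z))) := by
  rcases Nat.eq_zero_or_pos i with rfl | hi
  · obtain ⟨x, hx⟩ := hKne
    simpa using hcirc.norm_eval_homogeneousComponent_le hq 0 hx
  rcases eq_or_ne (eval z (homogeneousComponent i q)) 0 with h0 | h0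
  · rw [h0, norm_zero]
    exact (Real.exp_pos _).le
  have hmem : (i : ℝ)⁻¹ * Real.log ‖eval z (homogeneousComponent i q)‖ ∈ homCandSet K z :=
    ⟨i, _, hi, homogeneousComponent_isHomogeneous i q,
      fun _ hx => hcirc.norm_eval_homogeneousComponent_le hq i hx, h0, rfl⟩
  have hi' : (0 : ℝ) < i := by exact_mod_cast hi
  rw [← Real.log_le_iff_le_exp (norm_pos_iff.mpr h0), ← inv_mul_le_iff₀ hi']
  exact (le_csSup hbdd hmem).trans (le_max_right _ _)

lemma norm_eval_le_of_bddAbove_homCandSet (hKne : K.Nonempty) (hcirc : Circled N K)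
    {z : Fin N → ℂ} (hbdd : BddAbove (homCandSet K z))
    {q : MvPolynomial (Fin N) ℂ} (hq : ∀ x ∈ K, ‖eval x q‖ ≤ 1) :
    ‖eval z q‖ ≤
      (q.totalDegree + 1) * Real.exp (q.totalDegree * max 0 (sSup (homCandSet K z))) := by
  set M := max 0 (sSup (homCandSet K z))
  have hM : 0 ≤ M := le_max_left _ _
  calc ‖eval z q‖
      = ‖∑ i ∈ range (q.totalDegree + 1), eval z (homogeneousComponent i q)‖ := by
        rw [← map_sum, sum_homogeneousComponent]
    _ ≤ ∑ i ∈ range (q.totalDegree + 1), ‖eval z (homogeneousComponent i q)‖ := norm_sum_le _ _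
    _ ≤ ∑ _i ∈ range (q.totalDegree + 1), Real.exp (q.totalDegree * M) := by
        refine sum_le_sum fun i hi => ?_
        have hi : (i : ℝ) ≤ q.totalDegree := by
          exact_mod_cast Nat.lt_succ_iff.mp (mem_range.mp hi)
        exact (norm_eval_homogeneousComponent_le_exp hKne hcirc hbdd hq i).trans
          (Real.exp_le_exp.mpr (mul_le_mul_of_nonneg_right hi hM))
    _ = (q.totalDegree + 1) * Real.exp (q.totalDegree * M) := by simp

/-- Apply `norm_eval_le_of_bddAbove_homCandSet` to `p ^ k` and let `k → ∞` to get rid of the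
factor `deg p + 1`. -/
lemma VK_eq_max_sSup_homCandSet (hKne : K.Nonempty) (hcirc : Circled N K) {z : Fin N → ℂ}
    (hbdd : BddAbove (candSet N K z)) :
    VK N K z = max 0 (sSup (homCandSet K z)) := by
  have hbdd' := hbdd.mono (homCandSet_subset_candSet K z)
  set M := max 0 (sSup (homCandSet K z))
  have hM : 0 ≤ M := le_max_left _ _
  refine le_antisymm (max_le hM (Real.sSup_le ?_ hM)) ?_
  · rintro _ ⟨p, hd, hp, rfl⟩
    set d := p.totalDegree
    have hd' : (0 : ℝ) < d := by exact_mod_cast hd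
    rcases eq_or_ne (eval z p) 0 with h0 | h0
    · simpa [h0] using hM
    have hpos : 0 < ‖eval z p‖ := norm_pos_iff.mpr h0
    have hpow : ∀ k : ℕ, ‖eval z p‖ ^ k ≤ (d * k + 1) * Real.exp (k * (d * M)) := by
      intro k
      have hdeg : ((p ^ k).totalDegree : ℝ) ≤ d * k := by
        exact_mod_cast (totalDegree_pow p k).trans_eq (mul_comm _ _)
      have := norm_eval_le_of_bddAbove_homCandSet hKne hcirc hbdd'
        (q := p ^ k) fun x hx => by simpa using pow_le_one₀ (norm_nonneg _) (hp x hx)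
      rw [map_pow, norm_pow] at this
      refine this.trans ?_
      rw [← mul_assoc, mul_comm (k : ℝ)]
      gcongr
    have hlog : Real.log ‖eval z p‖ - d * M ≤ 0 := by
      refine le_zero_of_forall_nat_mul_le_log hd'.le fun k => ?_
      have := Real.log_le_log (pow_pos hpos k) (hpow k)
      rw [Real.log_pow, Real.log_mul (by positivity) (Real.exp_pos _).ne', Real.log_exp] at this
      linarith
    rw [inv_mul_le_iff₀ hd']
    linarith
  · refine max_le (le_max_left _ _) ?_
    rcases (homCandSet K z).eq_empty_or_nonempty with h | h
    · rw [h, Real.sSup_empty]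
      exact le_max_left _ _
    · exact le_max_of_le_right (csSup_le_csSup hbdd h (homCandSet_subset_candSet K z))

lemma nonempty_of_forall_bddAbove_candSet (hN : 1 ≤ N) (hbdd : ∀ z, BddAbove (candSet N K z)) :
    K.Nonempty := by
  by_contra! hK
  obtain ⟨b, hb⟩ := hbdd 1
  set c : ℂ := ((Real.exp (b + 1) : ℝ) : ℂ)
  have hc : c ≠ 0 := Complex.ofReal_ne_zero.mpr (Real.exp_pos _).ne'
  set p : MvPolynomial (Fin N) ℂ := monomial (Finsupp.single ⟨0, hN⟩ 1) c
  have hdeg : p.totalDegree = 1 := by simp [p, totalDegree_monomial _ hc]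
  have hmem : b + 1 ∈ candSet N K 1 :=
    ⟨p, hdeg.ge, by simp [hK], by simp [p, c, eval_monomial, Complex.norm_exp]⟩
  linarith [hb hmem]

lemma VK_smul_of_homCandSet_eq_empty (hKne : K.Nonempty) (hcirc : Circled N K)
    (hbdd : ∀ z, BddAbove (candSet N K z)) {z : Fin N → ℂ} (h : homCandSet K z = ∅) {l : ℂ}
    (hl : l ≠ 0) : VK N K (l • z) = 0 := by
  rw [VK_eq_max_sSup_homCandSet hKne hcirc (hbdd _), homCandSet_smul K hl, h, Set.image_empty,
    Real.sSup_empty, max_self]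

lemma VK_smul_of_homCandSet_nonempty (hKne : K.Nonempty) (hcirc : Circled N K)
    (hbdd : ∀ z, BddAbove (candSet N K z)) {z : Fin N → ℂ} (h : (homCandSet K z).Nonempty)
    {l : ℂ} (hl : l ≠ 0) :
    VK N K (l • z) = max 0 (sSup (homCandSet K z) + Real.log ‖l‖) := by
  rw [VK_eq_max_sSup_homCandSet hKne hcirc (hbdd _), homCandSet_smul K hl]
  congr 1
  exact ((OrderIso.addRight _).map_csSup' h ((hbdd z).mono (homCandSet_subset_candSet K z))).symm

lemma robin_eq_bot_of_homCandSet_eq_empty (hKne : K.Nonempty) (hcirc : Circled N K)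
    (hbdd : ∀ z, BddAbove (candSet N K z)) {z : Fin N → ℂ} (h : homCandSet K z = ∅) :
    robin N K z = ⊥ := by
  have hlog : Tendsto (fun l : ℂ => Real.log ‖l‖) (Bornology.cobounded ℂ) atTop :=
    Real.tendsto_log_atTop.comp tendsto_norm_cobounded_atTop
  rw [robin, comap_norm_atTop]
  refine Tendsto.limsup_eq ((EReal.tendsto_coe_atBot.comp
    (tendsto_neg_atTop_atBot.comp hlog)).congr' ?_)
  filter_upwards [eventually_cobounded_le_norm 1] with l hl
  have hl0 : l ≠ 0 := by rintro rfl; norm_num at hl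
  simp [VK_smul_of_homCandSet_eq_empty hKne hcirc hbdd h hl0]

lemma robin_eq_sSup_homCandSet (hKne : K.Nonempty) (hcirc : Circled N K)
    (hbdd : ∀ z, BddAbove (candSet N K z)) {z : Fin N → ℂ} (h : (homCandSet K z).Nonempty) :
    robin N K z = (sSup (homCandSet K z) : ℝ) := by
  have hlog : Tendsto (fun l : ℂ => Real.log ‖l‖) (Bornology.cobounded ℂ) atTop :=
    Real.tendsto_log_atTop.comp tendsto_norm_cobounded_atTop
  rw [robin, comap_norm_atTop]
  refine Tendsto.limsup_eq (tendsto_const_nhds.congr' ?_)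
  filter_upwards [eventually_cobounded_le_norm 1,
    hlog.eventually_ge_atTop (-sSup (homCandSet K z))] with l hl hlogl
  have hl0 : l ≠ 0 := by rintro rfl; norm_num at hl
  rw [VK_smul_of_homCandSet_nonempty hKne hcirc hbdd h hl0, max_eq_right (by linarith)]
  simp

end

theorem statement12 (hN : 1 ≤ N) (K : Set (Fin N → ℂ))
    (hcirc : Circled N K) (hreg : Regular N K) :
    ∀ z : Fin N → ℂ, ((VK N K z : ℝ) : EReal) = max (robin N K z) 0 := by
  intro z
  have hKne := nonempty_of_forall_bddAbove_candSet hN hreg.1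
  rw [VK_eq_max_sSup_homCandSet hKne hcirc (hreg.1 z)]
  rcases (homCandSet K z).eq_empty_or_nonempty with h | h
  · rw [robin_eq_bot_of_homCandSet_eq_empty hKne hcirc hreg.1 h, h]
    simp
  · rw [robin_eq_sSup_homCandSet hKne hcirc hreg.1 h, max_comm]
    norm_cast
end
end

section
/- Let ρ : ℂ² → [−∞,∞) be upper semicontinuous and suppose V := max(ρ, 0) is real-valued and continuous on ℂ². Let (n_j) be a strictly increasing sequence of positive integers, let (ε_j) be positive reals with ε_j → 0, and for each j let P_j, Q_j be polynomials in two complex variables satisfying ρ(z,w) − ε_j ≤ max((1/n_j)·log|P_j(z,w)|, (1/n_j)·log|Q_j(z,w)|) ≤ ρ(z,w) for all (z,w) ∈ ℂ² (inequalities in [−∞,∞)). Then the functions U_j(z,w) := max((1/n_j)·log|P_j(z,w) − 1|, (1/n_j)·log|Q_j(z,w) − 1|) converge to V uniformly on every compact subset of the open set {ρ < 0} ∪ {V > 0}. -/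
/-!
Write `u_j = max (n_j⁻¹ log |P_j|, n_j⁻¹ log |Q_j|)`, so that `ρ - ε_j ≤ u_j ≤ ρ`.
On a compact set where `ρ ≤ -c < 0`, both `|P_j|` and `|Q_j|` are at most `e^{-n_j c} ≤ 1/2`,
so `|P_j - 1|` and `|Q_j - 1|` lie in `[1/2, 2]` and `|U_j| ≤ log 2 / n_j`. On a compact set where
`V ≥ c > 0`, both `|P_j|, |Q_j| ≤ e^{n_j V}` and one of them is `≥ e^{n_j (V - ε_j)} ≥ 2`;
subtracting `1` then changes these moduli by a factor at most `2`, whence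
`|U_j - V| ≤ ε_j + log 2 / n_j`. A compact `C ⊆ {ρ < 0} ∪ {V > 0}` is covered by the compact
pieces `C ∩ {V ≤ 0} ⊆ {ρ < 0}` and `C \ {ρ < 0} ⊆ {V > 0}` (closed by continuity of `V` and
upper semicontinuity of `ρ`), on which the constants `c` exist by compactness.
-/

open MeasureTheory Filter Topology

noncomputable section

/-- Evaluation of a polynomial in two complex variables at a point of `ℂ × ℂ`. -/
def evalPt (p : MvPolynomial (Fin 2) ℂ) (z : ℂ × ℂ) : ℂ :=
  MvPolynomial.eval ![z.1, z.2] p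

open Real

theorem IsCompact.exists_lt_forall_le_coe_of_upperSemicontinuousOn {X : Type*}
    [TopologicalSpace X] {K : Set X} (hK : IsCompact K) {f : X → EReal}
    (hf : UpperSemicontinuousOn f K) {a : ℝ} (hfa : ∀ z ∈ K, f z < a) :
    ∃ b : ℝ, b < a ∧ ∀ z ∈ K, f z ≤ b := by
  rcases K.eq_empty_or_nonempty with rfl | hne
  · exact ⟨a - 1, by linarith, by simp⟩
  obtain ⟨z₀, hz₀, hmax⟩ := hf.exists_isMaxOn hne hK
  obtain ⟨b, hb, hba⟩ := EReal.exists_between_coe_real (hfa z₀ hz₀)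
  exact ⟨b, EReal.coe_lt_coe_iff.1 hba, fun z hz => (hmax hz).trans hb.le⟩

theorem tendstoUniformlyOn_of_dist_le {ι α β : Type*} [PseudoMetricSpace β]
    {F : ι → α → β} {f : α → β} {p : Filter ι} {s : Set α} {b : ι → ℝ}
    (hb : Tendsto b p (𝓝 0)) (h : ∀ᶠ i in p, ∀ x ∈ s, dist (f x) (F i x) ≤ b i) :
    TendstoUniformlyOn F f p s := by
  rw [Metric.tendstoUniformlyOn_iff]
  intro δ hδ
  filter_upwards [h, hb.eventually (gt_mem_nhds hδ)] with i hi hbi x hx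
  exact (hi x hx).trans_lt hbi

section ScaledLog

variable {x y : ℂ} {m : ℝ}

theorem norm_le_exp_of_inv_mul_elog_le (hm : 0 < m) {r : ℝ}
    (h : (m : EReal)⁻¹ * elog x ≤ r) : ‖x‖ ≤ exp (m * r) := by
  by_cases hx : x = 0
  · simp only [hx, norm_zero]
    positivity
  rw [elog, if_neg hx, ← EReal.coe_inv, ← EReal.coe_mul, EReal.coe_le_coe_iff,
    inv_mul_le_iff₀ hm] at h
  exact (log_le_iff_le_exp (norm_pos_iff.2 hx)).1 h

theorem exp_le_norm_of_le_inv_mul_elog (hm : 0 < m) {r : ℝ}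
    (h : (r : EReal) ≤ (m : EReal)⁻¹ * elog x) : exp (m * r) ≤ ‖x‖ := by
  have hx : x ≠ 0 := by
    rintro rfl
    rw [elog, if_pos rfl, ← EReal.coe_inv, EReal.coe_mul_bot_of_pos (inv_pos.2 hm)] at h
    exact EReal.coe_ne_bot r (le_bot_iff.1 h)
  rw [elog, if_neg hx, ← EReal.coe_inv, ← EReal.coe_mul, EReal.coe_le_coe_iff,
    le_inv_mul_iff₀ hm] at h
  exact (le_log_iff_exp_le (norm_pos_iff.2 hx)).1 h

theorem log_norm_sub_one_le {R : ℝ} (hR : 1 ≤ R) (hx : ‖x‖ ≤ R) :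
    log ‖x - 1‖ ≤ log 2 + log R := by
  rw [← log_mul two_ne_zero (by positivity)]
  rcases eq_or_ne x 1 with rfl | hx1
  · simp only [sub_self, norm_zero, log_zero]
    exact log_nonneg (by linarith)
  refine log_le_log (norm_pos_iff.2 (sub_ne_zero.2 hx1)) ?_
  calc ‖x - 1‖ ≤ ‖x‖ + ‖(1 : ℂ)‖ := norm_sub_le x 1
    _ ≤ 2 * R := by rw [norm_one]; linarith

theorem neg_log_two_le_log_norm_sub_one (hx : ‖x‖ ≤ 1 / 2) : -log 2 ≤ log ‖x - 1‖ := by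
  have h : 1 / 2 ≤ ‖x - 1‖ := by
    have := norm_sub_norm_le (1 : ℂ) x
    rw [norm_sub_rev, norm_one] at this
    linarith
  calc -log 2 = log (1 / 2) := by rw [one_div, log_inv]
    _ ≤ log ‖x - 1‖ := log_le_log (by norm_num) h

theorem log_norm_sub_log_two_le_log_norm_sub_one (hx : 2 ≤ ‖x‖) :
    log ‖x‖ - log 2 ≤ log ‖x - 1‖ := by
  have h : ‖x‖ / 2 ≤ ‖x - 1‖ := by
    have := norm_sub_norm_le x 1
    rw [norm_one] at this
    linarith
  calc log ‖x‖ - log 2 = log (‖x‖ / 2) := (log_div (by positivity) two_ne_zero).symm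
    _ ≤ log ‖x - 1‖ := log_le_log (by positivity) h

theorem inv_mul_log_norm_sub_one_le (hm : 0 < m) {v : ℝ} (hv : 0 ≤ v)
    (h : (m : EReal)⁻¹ * elog x ≤ v) : m⁻¹ * log ‖x - 1‖ ≤ v + log 2 / m := by
  have hlog := log_norm_sub_one_le (one_le_exp (by positivity))
    (norm_le_exp_of_inv_mul_elog_le hm h)
  rw [log_exp] at hlog
  calc m⁻¹ * log ‖x - 1‖ ≤ m⁻¹ * (log 2 + m * v) := by gcongr
    _ = v + log 2 / m := by field_simp; ring

theorem neg_log_two_div_le_inv_mul_log_norm_sub_one (hm : 0 < m) {c : ℝ}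
    (hc : log 2 ≤ m * c) (h : (m : EReal)⁻¹ * elog x ≤ (-c : ℝ)) :
    -(log 2 / m) ≤ m⁻¹ * log ‖x - 1‖ := by
  have hsmall : ‖x‖ ≤ 1 / 2 :=
    calc ‖x‖ ≤ exp (m * -c) := norm_le_exp_of_inv_mul_elog_le hm h
      _ ≤ exp (-log 2) := exp_le_exp.2 (by linarith)
      _ = 1 / 2 := by rw [exp_neg, exp_log two_pos, one_div]
  calc -(log 2 / m) = m⁻¹ * -log 2 := by field_simp
    _ ≤ m⁻¹ * log ‖x - 1‖ := by gcongr; exact neg_log_two_le_log_norm_sub_one hsmall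

theorem sub_log_two_div_le_inv_mul_log_norm_sub_one (hm : 0 < m) {t : ℝ}
    (ht : log 2 ≤ m * t) (h : (t : EReal) ≤ (m : EReal)⁻¹ * elog x) :
    t - log 2 / m ≤ m⁻¹ * log ‖x - 1‖ := by
  have hbig := exp_le_norm_of_le_inv_mul_elog hm h
  have htwo : 2 ≤ ‖x‖ := (exp_log two_pos).symm.le.trans ((exp_le_exp.2 ht).trans hbig)
  have hlog : m * t ≤ log ‖x‖ := (le_log_iff_exp_le (by positivity)).2 hbig
  calc t - log 2 / m = m⁻¹ * (m * t - log 2) := by field_simp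
    _ ≤ m⁻¹ * log ‖x - 1‖ := by
      gcongr
      linarith [log_norm_sub_log_two_le_log_norm_sub_one htwo]

theorem abs_max_inv_mul_log_norm_sub_one_le (hm : 0 < m) {c : ℝ} (hc₀ : 0 ≤ c)
    (hc : log 2 ≤ m * c)
    (h : max ((m : EReal)⁻¹ * elog x) ((m : EReal)⁻¹ * elog y) ≤ (-c : ℝ)) :
    |max (m⁻¹ * log ‖x - 1‖) (m⁻¹ * log ‖y - 1‖)| ≤ log 2 / m := by
  have hx := (le_max_left _ _).trans h
  have hy := (le_max_right _ _).trans h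
  have hneg : ((-c : ℝ) : EReal) ≤ (0 : ℝ) := EReal.coe_le_coe_iff.2 (by linarith)
  have hup := max_le (inv_mul_log_norm_sub_one_le hm le_rfl (hx.trans hneg))
    (inv_mul_log_norm_sub_one_le hm le_rfl (hy.trans hneg))
  have hlow : -(log 2 / m) ≤ max (m⁻¹ * log ‖x - 1‖) (m⁻¹ * log ‖y - 1‖) :=
    (neg_log_two_div_le_inv_mul_log_norm_sub_one hm hc hx).trans (le_max_left _ _)
  rw [abs_le]
  constructor <;> linarith

theorem abs_max_inv_mul_log_norm_sub_one_sub_le (hm : 0 < m) {v e : ℝ} (hv : 0 ≤ v)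
    (he : log 2 ≤ m * (v - e))
    (hlow : ((v - e : ℝ) : EReal) ≤ max ((m : EReal)⁻¹ * elog x) ((m : EReal)⁻¹ * elog y))
    (hup : max ((m : EReal)⁻¹ * elog x) ((m : EReal)⁻¹ * elog y) ≤ v) :
    |max (m⁻¹ * log ‖x - 1‖) (m⁻¹ * log ‖y - 1‖) - v| ≤ |e| + log 2 / m := by
  have hU_le := max_le (inv_mul_log_norm_sub_one_le hm hv ((le_max_left _ _).trans hup))
    (inv_mul_log_norm_sub_one_le hm hv ((le_max_right _ _).trans hup))
  have hle_U : v - e - log 2 / m ≤ max (m⁻¹ * log ‖x - 1‖) (m⁻¹ * log ‖y - 1‖) := by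
    rcases le_max_iff.1 hlow with h | h
    · exact le_max_of_le_left (sub_log_two_div_le_inv_mul_log_norm_sub_one hm he h)
    · exact le_max_of_le_right (sub_log_two_div_le_inv_mul_log_norm_sub_one hm he h)
  rw [abs_le]
  constructor <;> linarith [le_abs_self e, neg_abs_le e, abs_nonneg e]

end ScaledLog

theorem statement14_general (ρ : ℂ × ℂ → EReal) (hρ : UpperSemicontinuous ρ)
    (V : ℂ × ℂ → ℝ) (hV : ∀ p, (V p : EReal) = max (ρ p) 0) (hVc : Continuous V)
    (n : ℕ → ℕ) (hn : StrictMono n)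
    (ε : ℕ → ℝ) (hε0 : Tendsto ε atTop (𝓝 0))
    (P Q : ℕ → MvPolynomial (Fin 2) ℂ)
    (hPQ : ∀ j, ∀ z : ℂ × ℂ,
      ρ z - ((ε j : ℝ) : EReal) ≤
        max (((n j : ℝ)⁻¹ : EReal) * elog (evalPt (P j) z))
          (((n j : ℝ)⁻¹ : EReal) * elog (evalPt (Q j) z)) ∧
      max (((n j : ℝ)⁻¹ : EReal) * elog (evalPt (P j) z))
          (((n j : ℝ)⁻¹ : EReal) * elog (evalPt (Q j) z)) ≤ ρ z) :
    ∀ C : Set (ℂ × ℂ), IsCompact C →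
      C ⊆ ({z | ρ z < 0} ∪ {z | 0 < V z}) →
      TendstoUniformlyOn
        (fun j z => max ((n j : ℝ)⁻¹ * Real.log ‖evalPt (P j) z - 1‖)
            ((n j : ℝ)⁻¹ * Real.log ‖evalPt (Q j) z - 1‖))
        V atTop C := by
  intro C hC hCsub
  have hρV : ∀ z, ¬ρ z < 0 → ρ z = V z := fun z hz => by
    rw [hV, max_eq_left (not_lt.1 hz)]
  have hV_zero : ∀ z, ρ z < 0 → V z = 0 := fun z hz => by
    exact_mod_cast (hV z).trans (max_eq_right hz.le)
  obtain ⟨b, hb, hρb⟩ : ∃ b : ℝ, b < 0 ∧ ∀ z ∈ C ∩ {z | V z ≤ 0}, ρ z ≤ b :=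
    (hC.inter_right (isClosed_le hVc continuous_const)
      ).exists_lt_forall_le_coe_of_upperSemicontinuousOn (hρ.upperSemicontinuousOn _)
      fun z ⟨hzC, (hzV : V z ≤ 0)⟩ => (hCsub hzC).resolve_right hzV.not_gt
  obtain ⟨c, hc, hcV⟩ : ∃ c > 0, ∀ z ∈ C \ {z | ρ z < 0}, c ≤ V z :=
    (hC.diff (hρ.isOpen_preimage 0)).exists_forall_le' hVc.continuousOn
      fun z hz => (hCsub hz.1).resolve_left hz.2
  have hn_top : Tendsto (fun j => (n j : ℝ)) atTop atTop :=
    tendsto_natCast_atTop_atTop.comp hn.tendsto_atTop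
  have hneg : ∀ᶠ j in atTop, log 2 ≤ n j * -b :=
    (hn_top.atTop_mul_const (neg_pos.2 hb)).eventually_ge_atTop _
  have hpos : ∀ᶠ j in atTop, log 2 ≤ n j * (c - ε j) :=
    (hn_top.atTop_mul_pos (by linarith) (tendsto_const_nhds.sub hε0)).eventually_ge_atTop _
  refine tendstoUniformlyOn_of_dist_le (b := fun j => |ε j| + log 2 / n j) ?_ ?_
  · simpa using hε0.abs.add (tendsto_const_nhds.div_atTop hn_top)
  filter_upwards [hn_top.eventually_gt_atTop 0, hneg, hpos] with j hm hjb hjc z hz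
  rw [dist_comm, Real.dist_eq]
  by_cases hρz : ρ z < 0
  · rw [hV_zero z hρz, sub_zero]
    refine (abs_max_inv_mul_log_norm_sub_one_le hm (neg_nonneg.2 hb.le) hjb ?_).trans
      (le_add_of_nonneg_left (abs_nonneg _))
    rw [neg_neg]
    exact (hPQ j z).2.trans (hρb z ⟨hz, (hV_zero z hρz).le⟩)
  · have hcz := hcV z ⟨hz, hρz⟩
    have hPQz := hPQ j z
    rw [hρV z hρz, ← EReal.coe_sub] at hPQz
    exact abs_max_inv_mul_log_norm_sub_one_sub_le hm (hc.le.trans hcz)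
      (hjc.trans (by gcongr)) hPQz.1 hPQz.2

theorem statement14 (ρ : ℂ × ℂ → EReal) (hρ : UpperSemicontinuous ρ)
    (V : ℂ × ℂ → ℝ) (hV : ∀ p, (V p : EReal) = max (ρ p) 0) (hVc : Continuous V)
    (n : ℕ → ℕ) (hn : StrictMono n) (hn0 : ∀ j, 0 < n j)
    (ε : ℕ → ℝ) (hε : ∀ j, 0 < ε j) (hε0 : Tendsto ε atTop (𝓝 0))
    (P Q : ℕ → MvPolynomial (Fin 2) ℂ)
    (hPQ : ∀ j, ∀ z : ℂ × ℂ,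
      ρ z - ((ε j : ℝ) : EReal) ≤
        max (((n j : ℝ)⁻¹ : EReal) * elog (evalPt (P j) z))
          (((n j : ℝ)⁻¹ : EReal) * elog (evalPt (Q j) z)) ∧
      max (((n j : ℝ)⁻¹ : EReal) * elog (evalPt (P j) z))
          (((n j : ℝ)⁻¹ : EReal) * elog (evalPt (Q j) z)) ≤ ρ z) :
    ∀ C : Set (ℂ × ℂ), IsCompact C →
      C ⊆ ({z | ρ z < 0} ∪ {z | 0 < V z}) →
      TendstoUniformlyOn
        (fun j z => max ((n j : ℝ)⁻¹ * Real.log ‖evalPt (P j) z - 1‖)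
            ((n j : ℝ)⁻¹ * Real.log ‖evalPt (Q j) z - 1‖))
        V atTop C :=
  statement14_general ρ hρ V hV hVc n hn ε hε0 P Q hPQ
end
end

section
/- Let Ω ⊆ ℝ^m be open, and let u and u_j (j ∈ ℕ) be real-valued C² functions on Ω with Δu ≥ 0 and Δu_j ≥ 0 on Ω for all j, where Δ denotes the Laplacian (the sum of the second partial derivatives). If u_j → u uniformly on every compact subset of Ω, then u_j → u in W^{1,2}_loc(Ω); in particular, for every compact C ⊆ Ω, ∫_C |∇u_j − ∇u|² dx → 0 as j → ∞. -/
open MeasureTheory Filter Topology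

noncomputable section

variable (m : ℕ)

/-- The `i`-th partial derivative of `v : ℝ^m → ℝ`. -/
def pderiv (v : (Fin m → ℝ) → ℝ) (i : Fin m) (x : Fin m → ℝ) : ℝ :=
  fderiv ℝ v x (Pi.single i 1)

/-- The Laplacian of `v : ℝ^m → ℝ` (the sum of the second partial derivatives). -/
def lap (v : (Fin m → ℝ) → ℝ) (x : Fin m → ℝ) : ℝ :=
  ∑ i, fderiv ℝ (fun y => fderiv ℝ v y (Pi.single i 1)) x (Pi.single i 1)

/-!
Write `w = u_j - u`, fix a smooth cutoff `ψ ≥ 0` with `ψ = 1` on `C` and compact support in `Ω`,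
and let `|w| ≤ δ` on the support of `ψ`. From `Δ(w²) = 2 w Δw + 2 |∇w|²` and Green's identity
`∫ ψ Δf = ∫ f Δψ` (two integrations by parts, valid because `ψ` vanishes near `∂Ω`),
  `∫ ψ |∇w|² = ½ ∫ w² Δψ - ∫ ψ w Δw ≤ ½ δ² ∫ |Δψ| + δ ∫ ψ |Δw|`.
Nothing bounds `Δu_j` pointwise, but subharmonicity gives `|Δw| ≤ Δw + 2 Δu`, and
`∫ ψ Δw = ∫ w Δψ ≤ δ ∫ |Δψ|`. So `∫_C |∇w|² = O(δ)`, and `δ → 0` by uniform convergence.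
-/

open Set

section Directional

variable {E : Type*} [NormedAddCommGroup E] [NormedSpace ℝ E] {Ω : Set E} {f : E → ℝ}

theorem ContDiffOn.contDiffOn_fderiv_apply (hf : ContDiffOn ℝ 2 f Ω) (hΩ : IsOpen Ω) (v : E) :
    ContDiffOn ℝ 1 (fun y => fderiv ℝ f y v) Ω :=
  (hf.fderiv_of_isOpen hΩ (by norm_num)).clm_apply contDiffOn_const

theorem ContDiffOn.differentiableAt_of_isOpen (hf : ContDiffOn ℝ 2 f Ω) (hΩ : IsOpen Ω)
    {x : E} (hx : x ∈ Ω) : DifferentiableAt ℝ f x :=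
  (hf.contDiffAt (hΩ.mem_nhds hx)).differentiableAt (by norm_num)

theorem ContDiffOn.differentiableAt_fderiv_apply (hf : ContDiffOn ℝ 2 f Ω) (hΩ : IsOpen Ω)
    (v : E) {x : E} (hx : x ∈ Ω) : DifferentiableAt ℝ (fun y => fderiv ℝ f y v) x :=
  ((hf.contDiffOn_fderiv_apply hΩ v).contDiffAt (hΩ.mem_nhds hx)).differentiableAt one_ne_zero

theorem ContDiffOn.continuousOn_fderiv_fderiv_apply (hf : ContDiffOn ℝ 2 f Ω) (hΩ : IsOpen Ω)
    (v : E) : ContinuousOn (fun x => fderiv ℝ (fun y => fderiv ℝ f y v) x v) Ω :=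
  ((hf.contDiffOn_fderiv_apply hΩ v).continuousOn_fderiv_of_isOpen hΩ le_rfl).clm_apply
    continuousOn_const

end Directional

section GreenIdentity

variable {E : Type*} [NormedAddCommGroup E] [MeasurableSpace E] [BorelSpace E] {μ : Measure E}
  {Ω : Set E} {φ f : E → ℝ}

theorem HasCompactSupport.integrable_mul_of_continuousOn [IsFiniteMeasureOnCompacts μ]
    (hφc : HasCompactSupport φ) (hφ : Continuous φ) (hΩ : IsOpen Ω) (hφΩ : tsupport φ ⊆ Ω)
    (hf : ContinuousOn f Ω) : Integrable (fun x => φ x * f x) μ :=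
  ((hφ.continuousOn.mul hf).continuous_of_tsupport_subset hΩ
    (tsupport_mul_subset_left.trans hφΩ)).integrable_of_hasCompactSupport hφc.mul_right

variable [NormedSpace ℝ E]

theorem HasCompactSupport.integrable_fderiv_fderiv_apply_mul [IsFiniteMeasureOnCompacts μ]
    (hφc : HasCompactSupport φ) (hφ : ContDiff ℝ 2 φ) (hΩ : IsOpen Ω) (hφΩ : tsupport φ ⊆ Ω)
    (hf : ContinuousOn f Ω) (v : E) :
    Integrable (fun x => fderiv ℝ (fun y => fderiv ℝ φ y v) x v * f x) μ :=
  ((hφc.fderiv_apply (𝕜 := ℝ) v).fderiv_apply (𝕜 := ℝ) v).integrable_mul_of_continuousOn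
    (continuousOn_univ.mp (hφ.contDiffOn.continuousOn_fderiv_fderiv_apply isOpen_univ v)) hΩ
    (((tsupport_fderiv_apply_subset ℝ v).trans (tsupport_fderiv_apply_subset ℝ v)).trans hφΩ)
    hf

variable [FiniteDimensional ℝ E] [μ.IsAddHaarMeasure]

theorem integral_mul_fderiv_fderiv_eq (hΩ : IsOpen Ω) (hf : ContDiffOn ℝ 2 f Ω)
    (hφ : ContDiff ℝ 2 φ) (hφc : HasCompactSupport φ) (hφΩ : tsupport φ ⊆ Ω) (v : E) :
    ∫ x, φ x * fderiv ℝ (fun y => fderiv ℝ f y v) x v ∂μ =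
      ∫ x, fderiv ℝ (fun y => fderiv ℝ φ y v) x v * f x ∂μ := by
  have hdφ : Continuous fun x => fderiv ℝ φ x v :=
    (hφ.continuous_fderiv (by norm_num)).clm_apply continuous_const
  have hdφc : HasCompactSupport fun x => fderiv ℝ φ x v := hφc.fderiv_apply (𝕜 := ℝ) v
  have hdφΩ : tsupport (fun x => fderiv ℝ φ x v) ⊆ Ω :=
    (tsupport_fderiv_apply_subset ℝ v).trans hφΩ
  have hdf : ContinuousOn (fun x => fderiv ℝ f x v) Ω :=
    (hf.contDiffOn_fderiv_apply hΩ v).continuousOn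
  rw [integral_mul_fderiv_eq_neg_fderiv_mul_of_integrable
      (hdφc.integrable_mul_of_continuousOn hdφ hΩ hdφΩ hdf)
      (hφc.integrable_mul_of_continuousOn hφ.continuous hΩ hφΩ
        (hf.continuousOn_fderiv_fderiv_apply hΩ v))
      (hφc.integrable_mul_of_continuousOn hφ.continuous hΩ hφΩ hdf)
      (fun x _ => hφ.differentiable two_ne_zero x)
      (fun x hx => hf.differentiableAt_fderiv_apply hΩ v (hφΩ hx)),
    integral_mul_fderiv_eq_neg_fderiv_mul_of_integrable
      (hφc.integrable_fderiv_fderiv_apply_mul hφ hΩ hφΩ hf.continuousOn v)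
      (hdφc.integrable_mul_of_continuousOn hdφ hΩ hdφΩ hdf)
      (hdφc.integrable_mul_of_continuousOn hdφ hΩ hdφΩ hf.continuousOn)
      (fun x _ => hφ.contDiffOn.differentiableAt_fderiv_apply isOpen_univ v (mem_univ x))
      (fun x hx => hf.differentiableAt_of_isOpen hΩ (hdφΩ hx)), neg_neg]

end GreenIdentity

theorem exists_contDiff_cutoff {E : Type*} [NormedAddCommGroup E] [NormedSpace ℝ E]
    [FiniteDimensional ℝ E] {C Ω : Set E} (hC : IsCompact C) (hΩ : IsOpen Ω) (hCΩ : C ⊆ Ω) :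
    ∃ ψ : E → ℝ, ContDiff ℝ 2 ψ ∧ HasCompactSupport ψ ∧ tsupport ψ ⊆ Ω ∧
      (∀ x ∈ C, ψ x = 1) ∧ ∀ x, 0 ≤ ψ x := by
  obtain ⟨K, hK, hCK, hKΩ⟩ := exists_compact_between hC hΩ hCΩ
  obtain ⟨ψ, hψ1, hψ0, hψ01⟩ :=
    exists_contMDiffMap_one_nhds_of_subset_interior (modelWithCornersSelf ℝ E) (n := 2)
      hC.isClosed hCK
  have hψK : tsupport ψ ⊆ K :=
    closure_minimal (fun x hx => by_contra fun h => hx (hψ0 x h)) hK.isClosed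
  exact ⟨ψ, ψ.contMDiff.contDiff, hK.of_isClosed_subset (isClosed_tsupport _) hψK,
    hψK.trans hKΩ, fun x hx => hψ1.self_of_nhdsSet x hx, fun x => (hψ01 x).1⟩

theorem tendsto_zero_of_forall_eventually_le {ι : Type*} {l : Filter ι} {a : ι → ℝ}
    {g : ℝ → ℝ} (hg : Tendsto g (𝓝 0) (𝓝 0)) (ha : ∀ j, 0 ≤ a j)
    (h : ∀ δ > 0, ∀ᶠ j in l, a j ≤ g δ) : Tendsto a l (𝓝 0) := by
  refine tendsto_order.2 ⟨fun b hb => Eventually.of_forall fun j => hb.trans_le (ha j),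
    fun ε hε => ?_⟩
  obtain ⟨δ, hgδ, hδ⟩ := ((hg.mono_left nhdsWithin_le_nhds).eventually (gt_mem_nhds hε)).and
    (self_mem_nhdsWithin (s := Ioi 0)) |>.exists
  exact (h δ hδ).mono fun j hj => hj.trans_lt hgδ

theorem setIntegral_sq_le {E : Type*} [MeasurableSpace E] {μ : Measure E} {s : Set E}
    {f : E → ℝ} {δ : ℝ} (hs : μ s < ⊤) (hf : ∀ x ∈ s, |f x| ≤ δ) :
    ∫ x in s, f x ^ 2 ∂μ ≤ δ ^ 2 * μ.real s :=
  (Real.le_norm_self _).trans <|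
    norm_setIntegral_le_of_norm_le_const (f := fun x => f x ^ 2) hs fun x hx => by
      rw [norm_pow, Real.norm_eq_abs]
      exact pow_le_pow_left₀ (abs_nonneg _) (hf x hx) 2

theorem mul_le_of_forall_mem_tsupport {X : Type*} [TopologicalSpace X] {ψ w : X → ℝ} {δ : ℝ}
    (hwδ : ∀ x ∈ tsupport ψ, |w x| ≤ δ) (x : X) : ψ x * w x ≤ δ * |ψ x| := by
  by_cases hx : x ∈ tsupport ψ
  · calc ψ x * w x ≤ |ψ x| * |w x| := (le_abs_self _).trans (abs_mul _ _).le
      _ ≤ δ * |ψ x| := by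
        rw [mul_comm]
        exact mul_le_mul_of_nonneg_right (hwδ x hx) (abs_nonneg _)
  · simp [image_eq_zero_of_notMem_tsupport hx]

section Laplacian

variable {m} {Ω : Set (Fin m → ℝ)} {f g φ : (Fin m → ℝ) → ℝ}

theorem continuousOn_lap (hΩ : IsOpen Ω) (hf : ContDiffOn ℝ 2 f Ω) : ContinuousOn (lap m f) Ω :=
  continuousOn_finsetSum _ fun _ _ => hf.continuousOn_fderiv_fderiv_apply hΩ _

theorem tsupport_lap_subset : tsupport (lap m φ) ⊆ tsupport φ := by
  refine closure_minimal (fun x hx => ?_) (isClosed_tsupport φ)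
  by_contra hxφ
  refine hx (Finset.sum_eq_zero fun i _ => ?_)
  rw [fderiv_of_notMem_tsupport ℝ fun h =>
    hxφ (tsupport_fderiv_apply_subset ℝ (Pi.single i 1) h)]
  rfl

theorem HasCompactSupport.lap (hφ : HasCompactSupport φ) : HasCompactSupport (lap m φ) :=
  hφ.of_isClosed_subset (isClosed_tsupport _) tsupport_lap_subset

theorem ContDiff.continuous_lap (hφ : ContDiff ℝ 2 φ) : Continuous (lap m φ) :=
  continuousOn_univ.mp (continuousOn_lap isOpen_univ hφ.contDiffOn)

theorem pderiv_sub {x : Fin m → ℝ} (hf : DifferentiableAt ℝ f x) (hg : DifferentiableAt ℝ g x)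
    (i : Fin m) : pderiv m (f - g) i x = pderiv m f i x - pderiv m g i x := by
  simp [pderiv, fderiv_sub hf hg]

theorem lap_sub (hΩ : IsOpen Ω) (hf : ContDiffOn ℝ 2 f Ω) (hg : ContDiffOn ℝ 2 g Ω)
    {x : Fin m → ℝ} (hx : x ∈ Ω) : lap m (f - g) x = lap m f x - lap m g x := by
  rw [lap, lap, lap, ← Finset.sum_sub_distrib]
  refine Finset.sum_congr rfl fun i _ => ?_
  have hnear : (fun y => fderiv ℝ (f - g) y (Pi.single i 1)) =ᶠ[𝓝 x]
      fun y => fderiv ℝ f y (Pi.single i 1) - fderiv ℝ g y (Pi.single i 1) := by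
    filter_upwards [hΩ.mem_nhds hx] with y hy
    exact pderiv_sub (hf.differentiableAt_of_isOpen hΩ hy)
      (hg.differentiableAt_of_isOpen hΩ hy) i
  rw [hnear.fderiv_eq, fderiv_fun_sub (hf.differentiableAt_fderiv_apply hΩ _ hx)
    (hg.differentiableAt_fderiv_apply hΩ _ hx)]
  rfl

theorem lap_mul (hΩ : IsOpen Ω) (hf : ContDiffOn ℝ 2 f Ω) (hg : ContDiffOn ℝ 2 g Ω)
    {x : Fin m → ℝ} (hx : x ∈ Ω) :
    lap m (f * g) x =
      f x * lap m g x + g x * lap m f x + 2 * ∑ i, pderiv m f i x * pderiv m g i x := by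
  simp only [lap, Finset.mul_sum, ← Finset.sum_add_distrib]
  refine Finset.sum_congr rfl fun i _ => ?_
  have hnear : (fun y => fderiv ℝ (f * g) y (Pi.single i 1)) =ᶠ[𝓝 x]
      fun y => f y * fderiv ℝ g y (Pi.single i 1) + g y * fderiv ℝ f y (Pi.single i 1) := by
    filter_upwards [hΩ.mem_nhds hx] with y hy
    rw [fderiv_mul (hf.differentiableAt_of_isOpen hΩ hy) (hg.differentiableAt_of_isOpen hΩ hy)]
    rfl
  have hderiv : HasFDerivAt
      (fun y => f y * fderiv ℝ g y (Pi.single i 1) + g y * fderiv ℝ f y (Pi.single i 1)) _ x :=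
    ((hf.differentiableAt_of_isOpen hΩ hx).hasFDerivAt.mul
        (hg.differentiableAt_fderiv_apply hΩ (Pi.single i 1) hx).hasFDerivAt).add
      ((hg.differentiableAt_of_isOpen hΩ hx).hasFDerivAt.mul
        (hf.differentiableAt_fderiv_apply hΩ (Pi.single i 1) hx).hasFDerivAt)
  rw [hnear.fderiv_eq, hderiv.fderiv]
  simp only [pderiv, add_apply, smul_apply, smul_eq_mul]
  ring

theorem integral_mul_lap_eq (hΩ : IsOpen Ω) (hf : ContDiffOn ℝ 2 f Ω) (hφ : ContDiff ℝ 2 φ)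
    (hφc : HasCompactSupport φ) (hφΩ : tsupport φ ⊆ Ω) :
    ∫ x, φ x * lap m f x = ∫ x, lap m φ x * f x := by
  simp only [lap, Finset.mul_sum, Finset.sum_mul]
  rw [integral_finsetSum _ fun _ _ => hφc.integrable_mul_of_continuousOn hφ.continuous hΩ hφΩ
      (hf.continuousOn_fderiv_fderiv_apply hΩ _),
    integral_finsetSum _ fun _ _ =>
      hφc.integrable_fderiv_fderiv_apply_mul hφ hΩ hφΩ hf.continuousOn _]
  exact Finset.sum_congr rfl fun _ _ => integral_mul_fderiv_fderiv_eq hΩ hf hφ hφc hφΩ _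

variable {ψ w : (Fin m → ℝ) → ℝ}

theorem integral_mul_sum_sq_pderiv_eq (hΩ : IsOpen Ω) (hw : ContDiffOn ℝ 2 w Ω)
    (hψ : ContDiff ℝ 2 ψ) (hψc : HasCompactSupport ψ) (hψΩ : tsupport ψ ⊆ Ω) :
    ∫ x, ψ x * ∑ i, pderiv m w i x ^ 2 =
      (∫ x, lap m ψ x * (w x * w x)) / 2 - ∫ x, ψ x * (w x * lap m w x) := by
  have hpoint : ∀ x, ψ x * ∑ i, pderiv m w i x ^ 2 =
      ψ x * lap m (w * w) x / 2 - ψ x * (w x * lap m w x) := by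
    intro x
    by_cases hx : x ∈ Ω
    · simp only [lap_mul hΩ hw hw hx, sq]
      ring
    · simp [image_eq_zero_of_notMem_tsupport fun h => hx (hψΩ h)]
  simp_rw [hpoint]
  rw [integral_sub, integral_div, integral_mul_lap_eq (f := w * w) hΩ (hw.mul hw) hψ hψc hψΩ]
  · rfl
  · exact (hψc.integrable_mul_of_continuousOn hψ.continuous hΩ hψΩ
      (continuousOn_lap hΩ (hw.mul hw))).div_const 2
  · exact hψc.integrable_mul_of_continuousOn hψ.continuous hΩ hψΩ
      (hw.continuousOn.mul (continuousOn_lap hΩ hw))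

theorem integrable_abs_lap (hψ : ContDiff ℝ 2 ψ) (hψc : HasCompactSupport ψ) :
    Integrable (fun x => |lap m ψ x|) :=
  hψ.continuous_lap.abs.integrable_of_hasCompactSupport hψc.lap.abs

theorem integral_mul_sum_sq_pderiv_le (hΩ : IsOpen Ω) (hw : ContDiffOn ℝ 2 w Ω)
    (hψ : ContDiff ℝ 2 ψ) (hψc : HasCompactSupport ψ) (hψΩ : tsupport ψ ⊆ Ω)
    (hψ0 : ∀ x, 0 ≤ ψ x) {δ : ℝ} (hwδ : ∀ x ∈ tsupport ψ, |w x| ≤ δ) :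
    ∫ x, ψ x * ∑ i, pderiv m w i x ^ 2 ≤
      δ ^ 2 / 2 * (∫ x, |lap m ψ x|) + δ * ∫ x, ψ x * |lap m w x| := by
  have hsq : ∫ x, lap m ψ x * (w x * w x) ≤ δ ^ 2 * ∫ x, |lap m ψ x| := by
    rw [← integral_const_mul]
    refine integral_mono (hψc.lap.integrable_mul_of_continuousOn hψ.continuous_lap hΩ
      (tsupport_lap_subset.trans hψΩ) (hw.continuousOn.mul hw.continuousOn))
      ((integrable_abs_lap hψ hψc).const_mul _)
      (mul_le_of_forall_mem_tsupport fun x hx => ?_)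
    have hwx := hwδ x (tsupport_lap_subset hx)
    rw [abs_mul, sq]
    exact mul_le_mul hwx hwx (abs_nonneg _) ((abs_nonneg _).trans hwx)
  have hlap : -∫ x, ψ x * (w x * lap m w x) ≤ δ * ∫ x, ψ x * |lap m w x| := by
    rw [← integral_neg, ← integral_const_mul]
    refine integral_mono (hψc.integrable_mul_of_continuousOn hψ.continuous hΩ hψΩ
      (hw.continuousOn.mul (continuousOn_lap hΩ hw))).neg
      ((hψc.integrable_mul_of_continuousOn hψ.continuous hΩ hψΩ
        (continuousOn_lap hΩ hw).abs).const_mul _) fun x => ?_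
    by_cases hx : x ∈ tsupport ψ
    · have hwx : -(w x * lap m w x) ≤ δ * |lap m w x| := by
        calc -(w x * lap m w x) ≤ |w x| * |lap m w x| := by
              rw [← abs_mul]
              exact neg_le_abs _
          _ ≤ δ * |lap m w x| := mul_le_mul_of_nonneg_right (hwδ x hx) (abs_nonneg _)
      nlinarith [hψ0 x]
    · simp [image_eq_zero_of_notMem_tsupport hx]
  rw [integral_mul_sum_sq_pderiv_eq hΩ hw hψ hψc hψΩ]
  linear_combination (1 / 2 : ℝ) * hsq + hlap

theorem integral_mul_abs_lap_sub_le {v u : (Fin m → ℝ) → ℝ} (hΩ : IsOpen Ω)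
    (hv : ContDiffOn ℝ 2 v Ω) (hu : ContDiffOn ℝ 2 u Ω) (hv0 : ∀ x ∈ Ω, 0 ≤ lap m v x)
    (hu0 : ∀ x ∈ Ω, 0 ≤ lap m u x) (hψ : ContDiff ℝ 2 ψ) (hψc : HasCompactSupport ψ)
    (hψΩ : tsupport ψ ⊆ Ω) (hψ0 : ∀ x, 0 ≤ ψ x) {δ : ℝ}
    (hδ : ∀ x ∈ tsupport ψ, |v x - u x| ≤ δ) :
    ∫ x, ψ x * |lap m (v - u) x| ≤ δ * (∫ x, |lap m ψ x|) + 2 * ∫ x, ψ x * lap m u x := by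
  have hvu : ContDiffOn ℝ 2 (v - u) Ω := hv.sub hu
  have hint : ∀ {f}, ContinuousOn f Ω → Integrable (fun x => ψ x * f x) :=
    hψc.integrable_mul_of_continuousOn hψ.continuous hΩ hψΩ
  calc ∫ x, ψ x * |lap m (v - u) x|
      ≤ ∫ x, (ψ x * lap m (v - u) x + 2 * (ψ x * lap m u x)) := by
        refine integral_mono (hint (continuousOn_lap hΩ hvu).abs)
          ((hint (continuousOn_lap hΩ hvu)).add ((hint (continuousOn_lap hΩ hu)).const_mul 2))
          fun x => ?_
        by_cases hx : x ∈ Ω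
        · have hlap : |lap m (v - u) x| ≤ lap m (v - u) x + 2 * lap m u x := by
            rw [lap_sub hΩ hv hu hx, abs_sub_le_iff]
            constructor <;> linarith [hv0 x hx, hu0 x hx]
          nlinarith [hψ0 x]
        · simp [image_eq_zero_of_notMem_tsupport fun h => hx (hψΩ h)]
    _ = (∫ x, lap m ψ x * (v - u) x) + 2 * ∫ x, ψ x * lap m u x := by
        rw [integral_add (hint (continuousOn_lap hΩ hvu))
            ((hint (continuousOn_lap hΩ hu)).const_mul 2), integral_const_mul,
          integral_mul_lap_eq hΩ hvu hψ hψc hψΩ]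
    _ ≤ δ * (∫ x, |lap m ψ x|) + 2 * ∫ x, ψ x * lap m u x := by
        gcongr
        rw [← integral_const_mul]
        exact integral_mono (hψc.lap.integrable_mul_of_continuousOn hψ.continuous_lap hΩ
          (tsupport_lap_subset.trans hψΩ) hvu.continuousOn)
          ((integrable_abs_lap hψ hψc).const_mul _)
          (mul_le_of_forall_mem_tsupport fun x hx => hδ x (tsupport_lap_subset hx))

theorem integral_mul_sum_sq_pderiv_sub_le {v u : (Fin m → ℝ) → ℝ} (hΩ : IsOpen Ω)
    (hv : ContDiffOn ℝ 2 v Ω) (hu : ContDiffOn ℝ 2 u Ω) (hv0 : ∀ x ∈ Ω, 0 ≤ lap m v x)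
    (hu0 : ∀ x ∈ Ω, 0 ≤ lap m u x) (hψ : ContDiff ℝ 2 ψ) (hψc : HasCompactSupport ψ)
    (hψΩ : tsupport ψ ⊆ Ω) (hψ0 : ∀ x, 0 ≤ ψ x) {δ : ℝ} (hδ0 : 0 ≤ δ)
    (hδ : ∀ x ∈ tsupport ψ, |v x - u x| ≤ δ) :
    ∫ x, ψ x * ∑ i, pderiv m (v - u) i x ^ 2 ≤
      3 / 2 * δ ^ 2 * (∫ x, |lap m ψ x|) + 2 * δ * ∫ x, ψ x * lap m u x :=
  calc ∫ x, ψ x * ∑ i, pderiv m (v - u) i x ^ 2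
      ≤ δ ^ 2 / 2 * (∫ x, |lap m ψ x|) + δ * ∫ x, ψ x * |lap m (v - u) x| :=
        integral_mul_sum_sq_pderiv_le hΩ (hv.sub hu) hψ hψc hψΩ hψ0 hδ
    _ ≤ δ ^ 2 / 2 * (∫ x, |lap m ψ x|) +
          δ * (δ * (∫ x, |lap m ψ x|) + 2 * ∫ x, ψ x * lap m u x) := by
        gcongr
        exact integral_mul_abs_lap_sub_le hΩ hv hu hv0 hu0 hψ hψc hψΩ hψ0 hδ
    _ = 3 / 2 * δ ^ 2 * (∫ x, |lap m ψ x|) + 2 * δ * ∫ x, ψ x * lap m u x := by ring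

theorem setIntegral_sum_sq_pderiv_sub_le {Ω C : Set (Fin m → ℝ)} {ψ v u : (Fin m → ℝ) → ℝ}
    (hΩ : IsOpen Ω) (hv : ContDiffOn ℝ 2 v Ω) (hu : ContDiffOn ℝ 2 u Ω) (hψ : Continuous ψ)
    (hψc : HasCompactSupport ψ) (hψΩ : tsupport ψ ⊆ Ω) (hψ0 : ∀ x, 0 ≤ ψ x)
    (hC : MeasurableSet C) (hCΩ : C ⊆ Ω) (hψ1 : ∀ x ∈ C, ψ x = 1) :
    ∫ x in C, ∑ i, (pderiv m v i x - pderiv m u i x) ^ 2 ≤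
      ∫ x, ψ x * ∑ i, pderiv m (v - u) i x ^ 2 := by
  calc ∫ x in C, ∑ i, (pderiv m v i x - pderiv m u i x) ^ 2
      = ∫ x in C, ψ x * ∑ i, pderiv m (v - u) i x ^ 2 :=
        setIntegral_congr_fun hC fun x hx => by
          simp only [hψ1 x hx, one_mul, pderiv_sub (hv.differentiableAt_of_isOpen hΩ (hCΩ hx))
            (hu.differentiableAt_of_isOpen hΩ (hCΩ hx))]
    _ ≤ ∫ x, ψ x * ∑ i, pderiv m (v - u) i x ^ 2 :=
        setIntegral_le_integral (hψc.integrable_mul_of_continuousOn hψ hΩ hψΩ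
          (continuousOn_finsetSum _ fun _ _ =>
            (((hv.sub hu).contDiffOn_fderiv_apply hΩ _).continuousOn.pow 2)))
          (Eventually.of_forall fun x =>
            mul_nonneg (hψ0 x) (Finset.sum_nonneg fun i _ => sq_nonneg _))

end Laplacian

theorem statement15 (Ω : Set (Fin m → ℝ)) (hΩ : IsOpen Ω)
    (u : (Fin m → ℝ) → ℝ) (uj : ℕ → (Fin m → ℝ) → ℝ)
    (hu : ContDiffOn ℝ 2 u Ω) (huj : ∀ j, ContDiffOn ℝ 2 (uj j) Ω)
    (hsub : ∀ x ∈ Ω, 0 ≤ lap m u x) (hsubj : ∀ j, ∀ x ∈ Ω, 0 ≤ lap m (uj j) x)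
    (hconv : ∀ C : Set (Fin m → ℝ), IsCompact C → C ⊆ Ω →
      TendstoUniformlyOn (fun j => uj j) u atTop C) :
    ∀ C : Set (Fin m → ℝ), IsCompact C → C ⊆ Ω →
      Tendsto (fun j => ∫ x in C, (uj j x - u x) ^ 2) atTop (𝓝 0) ∧
      Tendsto (fun j => ∫ x in C, ∑ i, (pderiv m (uj j) i x - pderiv m u i x) ^ 2)
        atTop (𝓝 0) := by
  intro C hC hCΩ
  have hclose : ∀ K, IsCompact K → K ⊆ Ω →
      ∀ δ > 0, ∀ᶠ j in atTop, ∀ x ∈ K, |uj j x - u x| ≤ δ := fun K hK hKΩ δ hδ =>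
    (Metric.tendstoUniformlyOn_iff.mp (hconv K hK hKΩ) δ hδ).mono fun j hj x hx => by
      rw [abs_sub_comm, ← Real.dist_eq]
      exact (hj x hx).le
  obtain ⟨ψ, hψ, hψc, hψΩ, hψ1, hψ0⟩ := exists_contDiff_cutoff hC hΩ hCΩ
  constructor
  · refine tendsto_zero_of_forall_eventually_le (g := fun δ => δ ^ 2 * volume.real C)
      (Continuous.tendsto' (by fun_prop) _ _ (by simp))
      (fun j => integral_nonneg fun x => sq_nonneg _) fun δ hδ => ?_
    filter_upwards [hclose C hC hCΩ δ hδ] with j hj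
    exact setIntegral_sq_le hC.measure_lt_top hj
  · refine tendsto_zero_of_forall_eventually_le
      (g := fun δ => 3 / 2 * δ ^ 2 * (∫ x, |lap m ψ x|) + 2 * δ * ∫ x, ψ x * lap m u x)
      (Continuous.tendsto' (by fun_prop) _ _ (by simp))
      (fun j => integral_nonneg fun x => Finset.sum_nonneg fun i _ => sq_nonneg _) fun δ hδ => ?_
    filter_upwards [hclose _ hψc hψΩ δ hδ] with j hj
    calc _ ≤ ∫ x, ψ x * ∑ i, pderiv m (uj j - u) i x ^ 2 :=
          setIntegral_sum_sq_pderiv_sub_le hΩ (huj j) hu hψ.continuous hψc hψΩ hψ0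
            hC.measurableSet hCΩ hψ1
      _ ≤ _ :=
          integral_mul_sum_sq_pderiv_sub_le hΩ (huj j) hu (hsubj j) hsub hψ hψc hψΩ hψ0 hδ.le hj
end
end

section
/- Let a : ℂ → [0,∞) be continuous with a(z) → 0 as |z| → ∞, suppose μ := a·σ is a probability measure on ℂ with ∫_ℂ |log|ζ|| dμ(ζ) < ∞, and suppose μ(ℂ \ Q_R) > 0 for every R > 0. Then for every η > 0 there exist an integer M ≥ 2 with 1/M < η and a real number R ≥ 6 such that ∫_{ℂ\Q_R} |log|ζ|| dμ(ζ) < η, μ(ℂ \ Q_R) = 1/M, and a(z) ≤ η for all z with |z| > R/3. -/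
open MeasureTheory Filter Topology

noncomputable section

/-- The open square `Q_R = {x + iy : |x| < R, |y| < R}`. -/
def QR (R : ℝ) : Set ℂ := {z : ℂ | |z.re| < R ∧ |z.im| < R}
/-!
Because μ ≪ σ and the boundary of every square is σ-null, the tail R ↦ μ(ℂ \ Q_R) is continuous
(`Q_R` is the ball of radius `R` for the sup norm on `ℝ × ℝ`); it tends to `0`, and then so does
the tail integral of the integrable function `|log|ζ||`. Beyond some `R₀ ≥ 6` the tail integral
is below `η` and `a ≤ η` off the disc of radius `R₀ / 3`. Pick `M ≥ 2` with `1/M` below both `η`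
and `μ(ℂ \ Q_{R₀}) > 0`; the intermediate value theorem gives `R ≥ R₀` with `μ(ℂ \ Q_R) = 1/M`.
-/

open Metric

theorem continuous_measure_ball {E : Type*} [NormedAddCommGroup E] [NormedSpace ℝ E]
    [FiniteDimensional ℝ E] [MeasurableSpace E] [BorelSpace E] [Nontrivial E]
    {μ ν : Measure E} [μ.IsAddHaarMeasure] [IsFiniteMeasure ν] (hν : ν ≪ μ) (x : E) :
    Continuous fun r : ℝ => ν (ball x r) := by
  refine continuous_iff_continuousAt.2 fun r => ?_
  refine tendsto_measure_of_ae_tendsto_indicator_of_isFiniteMeasure _ measurableSet_ball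
    (fun _ => measurableSet_ball) ?_
  have hsphere : ν (sphere x r) = 0 := hν (Measure.addHaar_sphere μ x r)
  filter_upwards [measure_eq_zero_iff_ae_notMem.1 hsphere] with y hy
  rcases Ne.lt_or_gt (mem_sphere.not.1 hy) with h | h
  · filter_upwards [eventually_gt_nhds h] with r' hr'
    simp [mem_ball, h, hr']
  · filter_upwards [eventually_lt_nhds h] with r' hr'
    simp [mem_ball, h.not_gt, hr'.not_gt]

theorem exists_ge_eq_of_tendsto_atTop {α δ : Type*} [ConditionallyCompleteLinearOrder α]
    [TopologicalSpace α] [OrderTopology α] [DenselyOrdered α] [LinearOrder δ]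
    [TopologicalSpace δ] [OrderClosedTopology δ] {f : α → δ} (hf : Continuous f) {l c : δ}
    (hl : Tendsto f atTop (𝓝 l)) (hlc : l < c) {x₀ : α} (hc : c ≤ f x₀) :
    ∃ x, x₀ ≤ x ∧ f x = c := by
  obtain ⟨x₁, hx₁c, hx₀x₁⟩ :=
    ((hl.eventually (eventually_lt_nhds hlc)).and (eventually_ge_atTop x₀)).exists
  obtain ⟨x, hx, hfx⟩ := intermediate_value_Icc' hx₀x₁ hf.continuousOn ⟨hx₁c.le, hc⟩
  exact ⟨x, hx.1, hfx⟩

theorem eventually_atTop_forall_lt_norm {E : Type*} [Norm E] {p : E → Prop}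
    (h : ∀ᶠ z in comap (‖·‖) atTop, p z) : ∀ᶠ R in atTop, ∀ z, R < ‖z‖ → p z := by
  obtain ⟨B, hB⟩ := eventually_atTop.1 (eventually_comap.1 h)
  filter_upwards [eventually_ge_atTop B] with R hR z hz using hB _ (hR.trans hz.le) z rfl

theorem measurableSet_QR (R : ℝ) : MeasurableSet (QR R) :=
  (measurableSet_lt (measurable_abs.comp Complex.measurable_re) measurable_const).inter
    (measurableSet_lt (measurable_abs.comp Complex.measurable_im) measurable_const)

theorem QR_eq_preimage_ball (R : ℝ) :
    QR R = Complex.measurableEquivRealProd ⁻¹' ball 0 R := by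
  ext z
  simp [QR, Complex.measurableEquivRealProd, Prod.norm_def]

theorem continuous_measure_compl_QR (μ : Measure ℂ) [IsFiniteMeasure μ] (hμ : μ ≪ volume) :
    Continuous fun R => μ (QR R)ᶜ := by
  have hball : Continuous fun R => (μ.map Complex.measurableEquivRealProd) (ball 0 R) := by
    refine continuous_measure_ball (μ := volume) ?_ 0
    rw [← Complex.volume_preserving_equiv_real_prod.map_eq]
    exact hμ.map Complex.measurableEquivRealProd.measurable
  simp_rw [measure_compl (measurableSet_QR _) (measure_ne_top μ _), QR_eq_preimage_ball,
    ← MeasurableEquiv.map_apply]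
  exact (ENNReal.continuous_sub_left (measure_ne_top μ _)).comp hball

theorem tendsto_measure_compl_QR_atTop (μ : Measure ℂ) [IsFiniteMeasure μ] :
    Tendsto (fun R => μ (QR R)ᶜ) atTop (𝓝 0) := by
  rw [← measure_empty (μ := μ)]
  refine tendsto_measure_of_tendsto_indicator_of_isFiniteMeasure _ μ
    (fun R => (measurableSet_QR R).compl) fun z => ?_
  filter_upwards [eventually_gt_atTop (max |z.re| |z.im|)] with R hR
  simpa [QR] using ⟨(le_max_left _ _).trans_lt hR, (le_max_right _ _).trans_lt hR⟩

theorem statement18_general (a : ℂ → ℝ)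
    (hvanish : Tendsto a (Filter.comap (fun z : ℂ => ‖z‖) Filter.atTop) (𝓝 0))
    (μ : Measure ℂ)
    (hμ : μ = (volume : Measure ℂ).withDensity (fun z => ENNReal.ofReal (a z)))
    (hprob : IsProbabilityMeasure μ)
    (hlog : Integrable (fun ζ => Real.log ‖ζ‖) μ)
    (htail : ∀ R : ℝ, 0 < R → 0 < μ (QR R)ᶜ)
    (η : ℝ) (hη : 0 < η) :
    ∃ (M : ℕ) (R : ℝ), 2 ≤ M ∧ ((M : ℝ))⁻¹ < η ∧ 6 ≤ R ∧
      (∫ ζ in (QR R)ᶜ, |Real.log ‖ζ‖| ∂μ) < η ∧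
      μ (QR R)ᶜ = (M : ENNReal)⁻¹ ∧
      (∀ z : ℂ, R / 3 < ‖z‖ → a z ≤ η) := by
  have hsmall : ∀ᶠ R in atTop, ∀ z : ℂ, R / 3 < ‖z‖ → a z ≤ η :=
    (tendsto_id.atTop_div_const (by norm_num : (0 : ℝ) < 3)).eventually
      (eventually_atTop_forall_lt_norm (hvanish.eventually (eventually_le_nhds hη)))
  have hint : ∀ᶠ R in atTop, (∫ ζ in (QR R)ᶜ, |Real.log ‖ζ‖| ∂μ) < η :=
    (hlog.abs.tendsto_setIntegral_nhds_zero (tendsto_measure_compl_QR_atTop μ)).eventually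
      (eventually_lt_nhds hη)
  obtain ⟨R₀, hR₀⟩ := eventually_atTop.1 ((eventually_ge_atTop 6).and (hint.and hsmall))
  have htailR₀ : 0 < μ (QR R₀)ᶜ := htail R₀ (by linarith [(hR₀ R₀ le_rfl).1])
  obtain ⟨M, hMη, hMtail, hM2⟩ := (((tendsto_inv_atTop_nhds_zero_nat (𝕜 := ℝ)).eventually
    (eventually_lt_nhds hη)).and ((ENNReal.tendsto_inv_nat_nhds_zero.eventually
    (eventually_lt_nhds htailR₀)).and (eventually_ge_atTop 2))).exists
  obtain ⟨R, hR₀R, hRM⟩ := exists_ge_eq_of_tendsto_atTop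
    (continuous_measure_compl_QR μ (hμ ▸ withDensity_absolutelyContinuous _ _))
    (tendsto_measure_compl_QR_atTop μ) (ENNReal.inv_pos.2 (ENNReal.natCast_ne_top M))
    hMtail.le
  obtain ⟨h6, hintR, hsmallR⟩ := hR₀ R hR₀R
  exact ⟨M, R, hM2, hMη, h6, hintR, hRM, hsmallR⟩

theorem statement18 (a : ℂ → ℝ) (hac : Continuous a) (ha0 : ∀ z, 0 ≤ a z)
    (hvanish : Tendsto a (Filter.comap (fun z : ℂ => ‖z‖) Filter.atTop) (𝓝 0))
    (μ : Measure ℂ)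
    (hμ : μ = (volume : Measure ℂ).withDensity (fun z => ENNReal.ofReal (a z)))
    (hprob : IsProbabilityMeasure μ)
    (hlog : Integrable (fun ζ => Real.log ‖ζ‖) μ)
    (htail : ∀ R : ℝ, 0 < R → 0 < μ (QR R)ᶜ)
    (η : ℝ) (hη : 0 < η) :
    ∃ (M : ℕ) (R : ℝ), 2 ≤ M ∧ ((M : ℝ))⁻¹ < η ∧ 6 ≤ R ∧
      (∫ ζ in (QR R)ᶜ, |Real.log ‖ζ‖| ∂μ) < η ∧
      μ (QR R)ᶜ = (M : ENNReal)⁻¹ ∧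
      (∀ z : ℂ, R / 3 < ‖z‖ → a z ≤ η) :=
  statement18_general a hvanish μ hμ hprob hlog htail η hη
end
end
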